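/- arXiv:2605.18994 — 5 statements merged into one kernel-verified Lean document; each statement's English description precedes it below -/
import Mathlib

section
/- Let Γ be a negative definite plumbing tree with n ≥ 1 vertices admitting an s-embedding φ into ℤ^N. For each index k ∈ {1,…,N}, let p_k be the number of vertices v such that e_k appears with coefficient +1 in φ(v), and n_k the number of vertices v such that e_k appears with coefficient −1 in φ(v). Then for every k one has (p_k, n_k) ∈ {(0,0), (1,0), (0,1), (1,1), (1,2)}, and there is exactly one index k with (p_k, n_k) = (1,0). In other words, every basis element appearing in the image of some vertex is of type 1, 2, 3 or 4, and there is exactly one basis element of type 1. -/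
open Finset

/-- The `i`-th standard basis vector of `ℤ^N`. -/
def eVec {N : ℕ} (i : Fin N) : Fin N → ℤ := Pi.single i 1

/-- The pairing of the diagonal lattice `(ℤ^N, ⟨-1⟩^N)`:
`⟨e i, e j⟩ = -δᵢⱼ`. -/
def diagPair {N : ℕ} (x y : Fin N → ℤ) : ℤ := -(∑ i, x i * y i)

/-- A plumbing graph: a finite set of vertices (a finite subset of `ℕ`), a symmetric
irreflexive adjacency relation supported on the vertices, and an integer framing
attached to each vertex. -/
structure Plumbing where
  verts : Finset ℕ
  adj : ℕ → ℕ → Bool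
  adj_symm : ∀ u v, adj u v = adj v u
  adj_irrefl : ∀ v, adj v v = false
  adj_support : ∀ u v, adj u v = true → u ∈ verts ∧ v ∈ verts
  framing : ℕ → ℤ

namespace Plumbing

/-- The underlying simple graph of a plumbing graph. -/
def toSG (G : Plumbing) : SimpleGraph ℕ where
  Adj u v := G.adj u v = true
  symm := by
    constructor
    intro u v h
    rw [G.adj_symm v u]
    exact h
  loopless := by
    constructor
    intro v h
    simp [G.adj_irrefl v] at h

/-- The entries of the intersection matrix `Q_Γ`:
`q v v` is the framing, `q u v = 1` if `u,v` adjacent, `0` otherwise. -/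
def q (G : Plumbing) (u v : ℕ) : ℤ :=
  if u = v then G.framing u else if G.adj u v = true then 1 else 0

/-- The intersection form `Q_Γ` on `ℤ^{V(Γ)}`; vectors are represented as functions
`ℕ → ℤ` (only the values on the vertices matter). -/
def QF (G : Plumbing) (x y : ℕ → ℤ) : ℤ :=
  ∑ u ∈ G.verts, ∑ v ∈ G.verts, x u * y v * G.q u v

/-- The plumbing graph is a forest (acyclic). -/
def IsForest (G : Plumbing) : Prop := G.toSG.IsAcyclic

/-- The subset `S` of vertices induces a connected subgraph: any two of its
vertices are joined by a walk staying inside `S`. -/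
def ConnOn (G : Plumbing) (S : Finset ℕ) : Prop :=
  ∀ u ∈ S, ∀ v ∈ S, ∃ p : G.toSG.Walk u v, ∀ x ∈ p.support, x ∈ S

/-- The plumbing graph is a tree: acyclic and connected. -/
def IsTree (G : Plumbing) : Prop := G.IsForest ∧ G.ConnOn G.verts

/-- The intersection form is negative definite. -/
def NegDef (G : Plumbing) : Prop :=
  ∀ x : ℕ → ℤ, (∃ v ∈ G.verts, x v ≠ 0) → G.QF x x < 0

/-- The intersection form is negative semidefinite. -/
def NegSemiDef (G : Plumbing) : Prop := ∀ x : ℕ → ℤ, G.QF x x ≤ 0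

/-- The degree (valency) of a vertex. -/
def degree (G : Plumbing) (v : ℕ) : ℕ :=
  (G.verts.filter fun u => G.adj v u = true).card

/-- An s-embedding of a plumbing graph into the diagonal lattice `ℤ^N`:
an injective form-preserving linear map (recorded by the images `φ v` of
the vertices) such that the sum of the images of the vertices of every nonempty
connected subgraph has the form `e_γ - ∑_{j ∈ I} e_j` with `γ ∉ I`. -/
structure IsSEmb (G : Plumbing) {N : ℕ} (φ : ℕ → Fin N → ℤ) : Prop where
  pairing : ∀ u ∈ G.verts, ∀ v ∈ G.verts, diagPair (φ u) (φ v) = G.q u v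
  indep : LinearIndependent ℤ (fun v : {x // x ∈ G.verts} => φ v.val)
  subgraphSum : ∀ S : Finset ℕ, S ⊆ G.verts → S.Nonempty → G.ConnOn S →
    ∃ (γ : Fin N) (I : Finset (Fin N)), γ ∉ I ∧
      (∑ v ∈ S, φ v) = eVec γ - ∑ j ∈ I, eVec j

/-- A p-embedding of a plumbing graph into the diagonal lattice `ℤ^N`:
an injective form-preserving linear map such that the sum of the images of the
vertices of every nonempty connected subgraph has the form `e_γ - ∑_{j ∈ I} e_j`
with `γ ∉ I`, or the form `-∑_{j ∈ I} e_j`. -/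
structure IsPEmb (G : Plumbing) {N : ℕ} (φ : ℕ → Fin N → ℤ) : Prop where
  pairing : ∀ u ∈ G.verts, ∀ v ∈ G.verts, diagPair (φ u) (φ v) = G.q u v
  indep : LinearIndependent ℤ (fun v : {x // x ∈ G.verts} => φ v.val)
  subgraphSum : ∀ S : Finset ℕ, S ⊆ G.verts → S.Nonempty → G.ConnOn S →
    (∃ (γ : Fin N) (I : Finset (Fin N)), γ ∉ I ∧
      (∑ v ∈ S, φ v) = eVec γ - ∑ j ∈ I, eVec j) ∨
    (∃ I : Finset (Fin N), (∑ v ∈ S, φ v) = -(∑ j ∈ I, eVec j))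

/-- The number of vertices `v` such that `e k` appears with coefficient `+1` in `φ v`. -/
def posCount (G : Plumbing) {N : ℕ} (φ : ℕ → Fin N → ℤ) (k : Fin N) : ℕ :=
  (G.verts.filter fun v => φ v k = 1).card

/-- The number of vertices `v` such that `e k` appears with coefficient `-1` in `φ v`. -/
def negCount (G : Plumbing) {N : ℕ} (φ : ℕ → Fin N → ℤ) (k : Fin N) : ℕ :=
  (G.verts.filter fun v => φ v k = -1).card

/-- `e k` is of type 1: coefficient `+1` in exactly one vertex image, `-1` in none. -/
def IsType1 (G : Plumbing) {N : ℕ} (φ : ℕ → Fin N → ℤ) (k : Fin N) : Prop :=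
  posCount G φ k = 1 ∧ negCount G φ k = 0

/-- `e k` is of type 2: coefficient `-1` in exactly one vertex image, `+1` in none. -/
def IsType2 (G : Plumbing) {N : ℕ} (φ : ℕ → Fin N → ℤ) (k : Fin N) : Prop :=
  posCount G φ k = 0 ∧ negCount G φ k = 1

/-- `e k` is of type 3: coefficient `+1` in exactly one vertex image, `-1` in exactly one. -/
def IsType3 (G : Plumbing) {N : ℕ} (φ : ℕ → Fin N → ℤ) (k : Fin N) : Prop :=
  posCount G φ k = 1 ∧ negCount G φ k = 1

/-- `e k` is of type 4: coefficient `+1` in exactly one vertex image, `-1` in exactly two. -/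
def IsType4 (G : Plumbing) {N : ℕ} (φ : ℕ → Fin N → ℤ) (k : Fin N) : Prop :=
  posCount G φ k = 1 ∧ negCount G φ k = 2

/-- `G'` is the vertex blowup of `G` at the vertex `v`, with new vertex `b`:
`b` is a new `(-1)`-framed leaf joined to `v`, and the framing of `v` drops by 1. -/
structure VertexBlowup (G G' : Plumbing) (v b : ℕ) : Prop where
  v_mem : v ∈ G.verts
  b_new : b ∉ G.verts
  verts_eq : G'.verts = insert b G.verts
  adj_iff : ∀ x y, (G'.adj x y = true) ↔
    (G.adj x y = true ∨ (x = v ∧ y = b) ∨ (x = b ∧ y = v))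
  framing_v : G'.framing v = G.framing v - 1
  framing_b : G'.framing b = -1
  framing_other : ∀ x ∈ G.verts, x ≠ v → G'.framing x = G.framing x

/-- `G'` is the edge blowup of `G` at the edge `(u,w)`, with new vertex `b`:
the edge `(u,w)` is replaced by a new `(-1)`-framed vertex `b` joined to both
`u` and `w`, whose framings each drop by 1. -/
structure EdgeBlowup (G G' : Plumbing) (u w b : ℕ) : Prop where
  edge : G.adj u w = true
  b_new : b ∉ G.verts
  verts_eq : G'.verts = insert b G.verts
  adj_iff : ∀ x y, (G'.adj x y = true) ↔
    ((G.adj x y = true ∧ ¬((x = u ∧ y = w) ∨ (x = w ∧ y = u))) ∨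
     (x = b ∧ (y = u ∨ y = w)) ∨ (y = b ∧ (x = u ∨ x = w)))
  framing_u : G'.framing u = G.framing u - 1
  framing_w : G'.framing w = G.framing w - 1
  framing_b : G'.framing b = -1
  framing_other : ∀ x ∈ G.verts, x ≠ u → x ≠ w → G'.framing x = G.framing x

/-- `G'` is obtained from `G` by a single blowup (at a vertex or at an edge). -/
def BlowupStep (G G' : Plumbing) : Prop :=
  (∃ v b, VertexBlowup G G' v b) ∨ (∃ u w b, EdgeBlowup G G' u w b)

/-- `G` blows down to `Δ`: `Δ` is obtained from `G` by a finite sequence of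
blowdowns, equivalently `G` is obtained from `Δ` by a finite sequence of blowups. -/
def BlowsDownTo (G Δ : Plumbing) : Prop :=
  Relation.ReflTransGen (fun X Y : Plumbing => BlowupStep Y X) G Δ

/-- `G'` is obtained from `G` by blowing down the vertex `v`,
i.e. `G` is a one-step blowup of `G'` whose new vertex is `v`. -/
def BlowdownAt (G G' : Plumbing) (v : ℕ) : Prop :=
  (∃ u, VertexBlowup G' G u v) ∨ (∃ u w, EdgeBlowup G' G u w v)

/-- The empty plumbing graph. -/
def IsEmptyGraph (G : Plumbing) : Prop := G.verts = ∅

/-- `G` blows down to the empty graph. -/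
def BlowsDownToEmpty (G : Plumbing) : Prop :=
  ∃ E : Plumbing, E.IsEmptyGraph ∧ BlowsDownTo G E

/-- A single-vertex plumbing graph with framing `0`. -/
def IsZeroVertexGraph (G : Plumbing) : Prop :=
  ∃ v, G.verts = {v} ∧ G.framing v = 0

/-- `G` blows down to the single-vertex graph with framing `0`. -/
def BlowsDownToZeroVertex (G : Plumbing) : Prop :=
  ∃ Z : Plumbing, Z.IsZeroVertexGraph ∧ BlowsDownTo G Z

/-- `G` is an induced subgraph of `H` with the same framings. -/
def IsInducedSubgraph (G H : Plumbing) : Prop :=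
  G.verts ⊆ H.verts ∧
  (∀ u ∈ G.verts, ∀ v ∈ G.verts, G.adj u v = H.adj u v) ∧
  (∀ v ∈ G.verts, G.framing v = H.framing v)

/-- `G` is sandwiched: it is an induced subgraph (with the same framings) of a
plumbing graph that blows down to the empty graph. -/
def Sandwiched (G : Plumbing) : Prop :=
  ∃ H : Plumbing, BlowsDownToEmpty H ∧ IsInducedSubgraph G H

/-- `G` is a planar multilink (pm) graph: it is an induced subgraph (with the same
framings) of a negative semidefinite plumbing graph that blows down to the
single-vertex graph with framing `0`. -/
def IsPM (G : Plumbing) : Prop :=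
  ∃ H : Plumbing, H.NegSemiDef ∧ BlowsDownToZeroVertex H ∧ IsInducedSubgraph G H

/-- `H` is obtained from `G` by attaching finitely many new leaves with framing `-1`
to vertices of `G`. -/
def AugmentedByLeaves (G H : Plumbing) : Prop :=
  IsInducedSubgraph G H ∧
  ∀ x ∈ H.verts, x ∉ G.verts →
    H.framing x = -1 ∧ ∃ v ∈ G.verts, ∀ y, (H.adj x y = true ↔ y = v)

/-- `H` is obtained from `G` by attaching a single new leaf `l` with framing `fr`
to the vertex `v`. -/
structure AttachLeaf (G H : Plumbing) (v l : ℕ) (fr : ℤ) : Prop where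
  v_mem : v ∈ G.verts
  l_new : l ∉ G.verts
  verts_eq : H.verts = insert l G.verts
  adj_iff : ∀ x y, (H.adj x y = true) ↔
    (G.adj x y = true ∨ (x = v ∧ y = l) ∨ (x = l ∧ y = v))
  framing_l : H.framing l = fr
  framing_other : ∀ x ∈ G.verts, H.framing x = G.framing x

/-- The plumbing graph obtained from `G` by decreasing the framing of `v` by `1`,
keeping all other framings and all edges. -/
def decFraming (G : Plumbing) (v : ℕ) : Plumbing :=
  { G with framing := Function.update G.framing v (G.framing v - 1) }

/-- The plumbing graph obtained from `G` by increasing the framing of `v` by `1`,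
keeping all other framings and all edges. -/
def incFraming (G : Plumbing) (v : ℕ) : Plumbing :=
  { G with framing := Function.update G.framing v (G.framing v + 1) }

/-- Membership in the Lipman cone `𝒮(Γ)`: all coordinates positive and
`Q_Γ(D, v) ≤ 0` for every vertex `v`. -/
def InLipman (G : Plumbing) (r : ℕ → ℤ) : Prop :=
  (∀ v ∈ G.verts, 0 < r v) ∧
  (∀ v ∈ G.verts, (∑ u ∈ G.verts, r u * G.q u v) ≤ 0)

end Plumbing

open Plumbing

lemma form_apply {N : ℕ} (γ : Fin N) (I : Finset (Fin N)) (hγ : γ ∉ I) (k : Fin N) :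
    (eVec γ - ∑ j ∈ I, eVec j) k = if k = γ then 1 else if k ∈ I then -1 else 0 := by
  simp only [Pi.sub_apply, Finset.sum_apply, eVec, Pi.single_apply]
  rw [Finset.sum_ite_eq]
  by_cases h1 : k = γ
  · subst h1
    simp [hγ]
  · by_cases h2 : k ∈ I <;> simp [h1, h2]

/-- for an s-embedding of a negative definite plumbing tree with
`n ≥ 1` vertices, every basis element has type data `(p_k, n_k)` among
`(0,0), (1,0), (0,1), (1,1), (1,2)`, and there is exactly one basis element of
type 1 (i.e. with `(p_k, n_k) = (1,0)`). -/
theorem stmt2_types {N : ℕ} (G : Plumbing) (hTree : G.IsTree) (hNeg : G.NegDef)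
    (hn : 1 ≤ G.verts.card) (φ : ℕ → Fin N → ℤ) (hφ : G.IsSEmb φ) :
    (∀ k : Fin N, (posCount G φ k, negCount G φ k) ∈
      ({(0,0), (1,0), (0,1), (1,1), (1,2)} : Set (ℕ × ℕ))) ∧
    (∃! k : Fin N, IsType1 G φ k) := by
  classical
  -- Singleton subgraphs give the coordinate form of each `φ v`.
  have hsing : ∀ v ∈ G.verts, ∃ (γ : Fin N) (I : Finset (Fin N)), γ ∉ I ∧
      φ v = eVec γ - ∑ j ∈ I, eVec j := by
    intro v hv
    have hconn : G.ConnOn {v} := by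
      intro u hu w hw
      simp only [Finset.mem_singleton] at hu hw
      subst hu; subst hw
      exact ⟨SimpleGraph.Walk.nil, by simp⟩
    obtain ⟨γ, I, hγ, hsum⟩ := hφ.subgraphSum {v} (by simpa using hv) ⟨v, by simp⟩ hconn
    exact ⟨γ, I, hγ, by simpa using hsum⟩
  -- Coordinate facts for each vertex image.
  have hcoord : ∀ v ∈ G.verts, (∀ k, φ v k = 1 ∨ φ v k = 0 ∨ φ v k = -1) ∧
      (∀ k k', φ v k = 1 → φ v k' = 1 → k = k') := by
    intro v hv
    obtain ⟨γ, I, hγ, heq⟩ := hsing v hv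
    have hval : ∀ k, φ v k = if k = γ then 1 else if k ∈ I then -1 else 0 := by
      intro k; rw [heq]; exact form_apply γ I hγ k
    constructor
    · intro k
      rw [hval k]
      split_ifs <;> simp
    · intro k k' h h'
      rw [hval k] at h
      rw [hval k'] at h'
      have hk : k = γ := by
        by_contra hkk
        rw [if_neg hkk] at h
        split_ifs at h <;> omega
      have hk' : k' = γ := by
        by_contra hkk
        rw [if_neg hkk] at h'
        split_ifs at h' <;> omega
      rw [hk, hk']
  -- Claim A: each coordinate has at most one vertex with coefficient +1.
  have hposle : ∀ k, posCount G φ k ≤ 1 := by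
    intro k
    by_contra hlt
    push_neg at hlt
    obtain ⟨u, hu, w, hw, huw⟩ := Finset.one_lt_card.mp hlt
    rw [Finset.mem_filter] at hu hw
    have hq : 0 ≤ G.q u w := by
      unfold Plumbing.q
      rw [if_neg huw]
      split_ifs <;> norm_num
    have hpair := hφ.pairing u hu.1 w hw.1
    have hsum_nonpos : ∑ i, φ u i * φ w i ≤ 0 := by
      have h1 : -(∑ i, φ u i * φ w i) = G.q u w := hpair
      omega
    have hnn : ∀ i ∈ Finset.univ, (0:ℤ) ≤ φ u i * φ w i := by
      intro i _
      by_cases hik : i = k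
      · subst hik
        rw [hu.2, hw.2]; norm_num
      · have h1 : φ u i ≤ 0 := by
          rcases (hcoord u hu.1).1 i with h | h | h
          · exact absurd ((hcoord u hu.1).2 i k h hu.2) hik
          · omega
          · omega
        have h2 : φ w i ≤ 0 := by
          rcases (hcoord w hw.1).1 i with h | h | h
          · exact absurd ((hcoord w hw.1).2 i k h hw.2) hik
          · omega
          · omega
        nlinarith [h1, h2]
    have hone : (1:ℤ) ≤ ∑ i, φ u i * φ w i := by
      have := Finset.single_le_sum hnn (Finset.mem_univ k)
      rw [hu.2, hw.2] at this
      linarith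
    linarith
  -- The coordinate of the total sum is `posCount - negCount`.
  have hTk : ∀ k, (∑ v ∈ G.verts, φ v) k
      = (posCount G φ k : ℤ) - (negCount G φ k : ℤ) := by
    intro k
    rw [Finset.sum_apply]
    have hsplit : ∀ v ∈ G.verts, φ v k
        = (if φ v k = 1 then (1:ℤ) else 0) - (if φ v k = -1 then 1 else 0) := by
      intro v hv
      rcases (hcoord v hv).1 k with h | h | h <;> rw [h] <;> norm_num
    rw [Finset.sum_congr rfl hsplit, Finset.sum_sub_distrib,
      Finset.sum_boole, Finset.sum_boole]
    simp [posCount, negCount]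
  -- The total sum has the special form.
  obtain ⟨v0, hv0⟩ := Finset.card_pos.mp hn
  obtain ⟨γ, J, hγJ, hT⟩ := hφ.subgraphSum G.verts subset_rfl ⟨v0, hv0⟩ hTree.2
  have hpn : ∀ k, (posCount G φ k : ℤ) - (negCount G φ k : ℤ)
      = if k = γ then 1 else if k ∈ J then -1 else 0 := by
    intro k
    rw [← hTk k, hT]
    exact form_apply γ J hγJ k
  constructor
  · intro k
    have h1 := hposle k
    have h2 := hpn k
    have h3 : (posCount G φ k : ℤ) - (negCount G φ k : ℤ) = 1
        ∨ (posCount G φ k : ℤ) - (negCount G φ k : ℤ) = -1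
        ∨ (posCount G φ k : ℤ) - (negCount G φ k : ℤ) = 0 := by
      rw [h2]; split_ifs <;> simp
    simp only [Set.mem_insert_iff, Set.mem_singleton_iff, Prod.mk.injEq]
    omega
  · refine ⟨γ, ?_, ?_⟩
    · have h1 := hposle γ
      have h2 := hpn γ
      rw [if_pos rfl] at h2
      constructor <;> omega
    · intro k hk
      obtain ⟨hk1, hk2⟩ := hk
      have h2 := hpn k
      rw [hk1, hk2] at h2
      by_contra hne
      rw [if_neg hne] at h2
      split_ifs at h2 <;> omega
end

section
/- Let Γ be a negative definite plumbing tree with n ≥ 1 vertices admitting an s-embedding φ into ℤ^N. Then the number of basis elements of types 3 and 4 (i.e. indices k such that e_k appears with coefficient +1 in exactly one vertex image and with coefficient −1 in exactly one or exactly two vertex images) equals n − 1. -/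
open Finset

open Plumbing

/-- STATEMENT 3: for an s-embedding of a negative definite plumbing tree with
`n ≥ 1` vertices, the number of basis elements of types 3 and 4 equals `n - 1`. -/
theorem stmt3_count {N : ℕ} (G : Plumbing) (hTree : G.IsTree) (hNeg : G.NegDef)
    (hn : 1 ≤ G.verts.card) (φ : ℕ → Fin N → ℤ) (hφ : G.IsSEmb φ) :
    {k : Fin N | IsType3 G φ k ∨ IsType4 G φ k}.ncard = G.verts.card - 1 := by
  classical
  have hne : G.verts.Nonempty := Finset.card_pos.mp hn
  -- the sum over all vertices
  obtain ⟨γ, I, hγI, hD⟩ := hφ.subgraphSum G.verts (subset_refl _) hne hTree.2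
  -- per-vertex structure: φ v = e_{γof v} - ∑_{Iof v} e
  have hsingle : ∀ v : ℕ, ∃ (g : Fin N) (J : Finset (Fin N)), v ∈ G.verts →
      g ∉ J ∧ φ v = eVec g - ∑ j ∈ J, eVec j := by
    intro v
    by_cases hv : v ∈ G.verts
    · have hconn : G.ConnOn {v} := by
        intro a ha b hb
        simp only [Finset.mem_singleton] at ha hb
        subst ha; subst hb
        exact ⟨SimpleGraph.Walk.nil, by simp⟩
      obtain ⟨g, J, hgJ, hsum⟩ := hφ.subgraphSum {v}
        (Finset.singleton_subset_iff.mpr hv) ⟨v, Finset.mem_singleton_self v⟩ hconn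
      exact ⟨g, J, fun _ => ⟨hgJ, by simpa using hsum⟩⟩
    · exact ⟨γ, ∅, fun h => absurd h hv⟩
  choose γof Iof hspec using hsingle
  have hval : ∀ v ∈ G.verts, ∀ k,
      φ v k = (if k = γof v then 1 else 0) - (if k ∈ Iof v then 1 else 0) := by
    intro v hv k
    rw [(hspec v hv).2]
    simp [eVec, Pi.single_apply, Finset.sum_apply, Finset.sum_ite_eq]
  have hpos : ∀ v ∈ G.verts, ∀ k, (φ v k = 1 ↔ k = γof v) := by
    intro v hv k
    have hgJ := (hspec v hv).1
    rw [hval v hv k]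
    split_ifs with h1 h2
    · exact absurd (h1 ▸ h2) hgJ
    · simp [h1]
    · exact iff_of_false (by norm_num) h1
    · exact iff_of_false (by norm_num) h1
  have hle : ∀ v ∈ G.verts, ∀ k, k ≠ γof v → φ v k ≤ 0 := by
    intro v hv k hk
    rw [hval v hv k, if_neg hk]
    split_ifs <;> norm_num
  have htri : ∀ v ∈ G.verts, ∀ k, φ v k = 1 ∨ φ v k = 0 ∨ φ v k = -1 := by
    intro v hv k
    rw [hval v hv k]
    split_ifs <;> norm_num
  -- injectivity of the positive index
  have hinj : ∀ u ∈ G.verts, ∀ w ∈ G.verts, γof u = γof w → u = w := by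
    intro u hu w hw hγuw
    by_contra hne'
    have hpair := hφ.pairing u hu w hw
    have hq : 0 ≤ G.q u w := by
      unfold Plumbing.q
      rw [if_neg hne']
      split_ifs <;> norm_num
    have hterm : ∀ i, 0 ≤ φ u i * φ w i := by
      intro i
      by_cases hik : i = γof u
      · have h1 : φ u i = 1 := (hpos u hu i).mpr hik
        have h2 : φ w i = 1 := (hpos w hw i).mpr (hik.trans hγuw)
        rw [h1, h2]; norm_num
      · have h1 : φ u i ≤ 0 := hle u hu i hik
        have h2 : φ w i ≤ 0 := hle w hw i (by rw [← hγuw]; exact hik)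
        nlinarith [h1, h2]
    have hsum1 : 1 ≤ ∑ i, φ u i * φ w i := by
      have h := Finset.single_le_sum (f := fun i => φ u i * φ w i)
        (fun i _ => hterm i) (Finset.mem_univ (γof u))
      have h1 : φ u (γof u) = 1 := (hpos u hu (γof u)).mpr rfl
      have h2 : φ w (γof u) = 1 := (hpos w hw (γof u)).mpr hγuw
      simpa [h1, h2] using h
    unfold diagPair at hpair
    linarith
  -- positive counts
  have hpc : ∀ k, posCount G φ k = (G.verts.filter fun v => γof v = k).card := by
    intro k
    unfold posCount
    congr 1
    apply Finset.filter_congr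
    intro v hv
    simp [hpos v hv k, eq_comm]
  have hpcle : ∀ k, posCount G φ k ≤ 1 := by
    intro k
    rw [hpc]
    apply Finset.card_le_one.mpr
    intro a ha b hb
    rw [Finset.mem_filter] at ha hb
    exact hinj a ha.1 b hb.1 (ha.2.trans hb.2.symm)
  set B : Finset (Fin N) := G.verts.image γof with hBdef
  have hB : ∀ k, k ∈ B ↔ posCount G φ k = 1 := by
    intro k
    constructor
    · intro hk
      rw [Finset.mem_image] at hk
      obtain ⟨v, hv, hvk⟩ := hk
      have h1 : 1 ≤ posCount G φ k := by
        rw [hpc]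
        refine Finset.card_pos.mpr ⟨v, ?_⟩
        rw [Finset.mem_filter]
        exact ⟨hv, hvk⟩
      exact le_antisymm (hpcle k) h1
    · intro hk
      rw [hpc] at hk
      obtain ⟨v, hv⟩ := Finset.card_pos.mp (by omega : 0 < (G.verts.filter fun v => γof v = k).card)
      rw [Finset.mem_filter] at hv
      rw [Finset.mem_image]
      exact ⟨v, hv.1, hv.2⟩
  have hBcard : B.card = G.verts.card :=
    Finset.card_image_of_injOn fun u hu w hw => hinj u hu w hw
  -- the coordinates of the total sum
  have hDk : ∀ k, (posCount G φ k : ℤ) - (negCount G φ k : ℤ) =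
      (if k = γ then 1 else 0) - (if k ∈ I then 1 else 0) := by
    intro k
    have hs : (∑ v ∈ G.verts, φ v) k = (posCount G φ k : ℤ) - (negCount G φ k : ℤ) := by
      rw [Finset.sum_apply]
      have hco : ∀ v ∈ G.verts,
          φ v k = (if φ v k = 1 then (1:ℤ) else 0) - (if φ v k = -1 then 1 else 0) := by
        intro v hv
        rcases htri v hv k with h | h | h <;> rw [h] <;> norm_num
      rw [Finset.sum_congr rfl hco, Finset.sum_sub_distrib, Finset.sum_boole, Finset.sum_boole]
      rfl
    rw [← hs, hD]
    simp [eVec, Pi.single_apply, Finset.sum_apply, Finset.sum_ite_eq]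
  have hγB : γ ∈ B := by
    have hd := hDk γ
    rw [if_pos rfl, if_neg hγI] at hd
    have h1 := hpcle γ
    rw [hB]
    omega
  have hset : {k : Fin N | IsType3 G φ k ∨ IsType4 G φ k} = ↑(B.erase γ) := by
    ext k
    simp only [Set.mem_setOf_eq, Finset.coe_erase, Set.mem_diff, Finset.mem_coe,
      Set.mem_singleton_iff]
    constructor
    · rintro (⟨hp, hm⟩ | ⟨hp, hm⟩) <;>
      · refine ⟨(hB k).mpr hp, ?_⟩
        intro hkγ
        have hd := hDk k
        rw [if_pos hkγ, if_neg (by rw [hkγ]; exact hγI)] at hd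
        omega
    · rintro ⟨hkB, hkγ⟩
      have hp := (hB k).mp hkB
      have hd := hDk k
      rw [if_neg hkγ] at hd
      unfold IsType3 IsType4
      split_ifs at hd with h
      · right; exact ⟨hp, by omega⟩
      · left; exact ⟨hp, by omega⟩
  rw [hset, Set.ncard_coe_finset, Finset.card_erase_of_mem hγB, hBcard]
end

section
/- Let Γ be a negative definite plumbing tree admitting an s-embedding φ into ℤ^N, and let e be a basis element of type 2, appearing with coefficient −1 in φ(v) for the (unique) vertex v. Let Γ̃ be the plumbing graph obtained from Γ by attaching a new leaf l with framing −1 to the vertex v. Then Γ̃ is negative definite, and the extension of φ defined by sending l to e is an s-embedding of Γ̃. -/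
open Finset

open Plumbing


section Aux

variable {N : ℕ}

lemma aux_eVec_apply (i j : Fin N) : eVec i j = if j = i then 1 else 0 :=
  Pi.single_apply i 1 j

lemma aux_sum_eVec_apply (I : Finset (Fin N)) (i : Fin N) :
    (∑ j ∈ I, eVec j) i = if i ∈ I then 1 else 0 := by
  rw [Finset.sum_apply]
  simp only [aux_eVec_apply]
  rw [Finset.sum_ite_eq I i (fun _ => (1:ℤ))]

lemma aux_sum_eVec_mul (k : Fin N) (y : Fin N → ℤ) :
    ∑ i, eVec k i * y i = y k := by
  simp only [aux_eVec_apply, ite_mul, one_mul, zero_mul]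
  rw [Finset.sum_ite_eq' Finset.univ k y]
  simp

lemma aux_expand (S : Finset ℕ) (ψ : ℕ → Fin N → ℤ) (y : ℕ → ℤ) :
    ∑ i, (∑ u ∈ S, y u * ψ u i) * (∑ w ∈ S, y w * ψ w i)
      = ∑ u ∈ S, ∑ w ∈ S, (y u * y w) * (∑ i, ψ u i * ψ w i) := by
  have h1 : ∀ i : Fin N, (∑ u ∈ S, y u * ψ u i) * (∑ w ∈ S, y w * ψ w i)
      = ∑ u ∈ S, ∑ w ∈ S, (y u * y w) * (ψ u i * ψ w i) := by
    intro i
    rw [Finset.sum_mul_sum]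
    exact Finset.sum_congr rfl fun u _ => Finset.sum_congr rfl fun w _ => by ring
  simp only [h1]
  rw [Finset.sum_comm]
  refine Finset.sum_congr rfl fun u _ => ?_
  rw [Finset.sum_comm]
  exact Finset.sum_congr rfl fun w _ => (Finset.mul_sum _ _ _).symm

lemma aux_QF_diag (G0 : Plumbing) (φ0 : ℕ → Fin N → ℤ)
    (hp : ∀ u ∈ G0.verts, ∀ w ∈ G0.verts, diagPair (φ0 u) (φ0 w) = G0.q u w)
    (x : ℕ → ℤ) :
    G0.QF x x = -(∑ i, (∑ u ∈ G0.verts, x u * φ0 u i) * (∑ w ∈ G0.verts, x w * φ0 w i)) := by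
  rw [aux_expand]
  have h2 : (∑ u ∈ G0.verts, ∑ w ∈ G0.verts, (x u * x w) * (∑ i, φ0 u i * φ0 w i))
      = ∑ u ∈ G0.verts, ∑ w ∈ G0.verts, -(x u * x w * G0.q u w) := by
    refine Finset.sum_congr rfl fun u hu => Finset.sum_congr rfl fun w hw => ?_
    have h := hp u hu w hw
    unfold diagPair at h
    have h3 : (∑ i, φ0 u i * φ0 w i) = -G0.q u w := by linarith
    rw [h3]; ring
  rw [h2]
  simp [Plumbing.QF]


lemma aux_shape {G : Plumbing} {φ : ℕ → Fin N → ℤ} (hφ : G.IsSEmb φ)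
    {u : ℕ} (hu : u ∈ G.verts) :
    ∃ a : Fin N, ∃ I : Finset (Fin N), a ∉ I ∧
      ∀ i, φ u i = (if i = a then 1 else 0) - (if i ∈ I then 1 else 0) := by
  obtain ⟨γ, I, hγI, hsum⟩ := hφ.subgraphSum {u} (Finset.singleton_subset_iff.mpr hu)
    ⟨u, Finset.mem_singleton_self u⟩ (by
      intro a ha b hb
      rw [Finset.mem_singleton] at ha hb
      subst ha; subst hb
      exact ⟨SimpleGraph.Walk.nil, by simp⟩)
  rw [Finset.sum_singleton] at hsum
  refine ⟨γ, I, hγI, fun i => ?_⟩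
  have h := congrFun hsum i
  rw [Pi.sub_apply, aux_eVec_apply, aux_sum_eVec_apply] at h
  exact h

lemma aux_entry {G : Plumbing} {φ : ℕ → Fin N → ℤ} (hφ : G.IsSEmb φ)
    {u : ℕ} (hu : u ∈ G.verts) (i : Fin N) :
    φ u i = 0 ∨ φ u i = 1 ∨ φ u i = -1 := by
  obtain ⟨a, I, -, h⟩ := aux_shape hφ hu
  rw [h i]
  split_ifs <;> norm_num

/-- Two distinct vertices cannot both have `+1` at the same coordinate. -/
lemma aux_no_shared_pos {G : Plumbing} {φ : ℕ → Fin N → ℤ} (hφ : G.IsSEmb φ)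
    {u1 u2 : ℕ} (h1 : u1 ∈ G.verts) (h2 : u2 ∈ G.verts) (hne : u1 ≠ u2)
    {γ : Fin N} (e1 : φ u1 γ = 1) (e2 : φ u2 γ = 1) : False := by
  have hq := hφ.pairing u1 h1 u2 h2
  -- every entry off a vertex's positive coordinate is ≤ 0
  have hnonpos : ∀ u ∈ G.verts, φ u γ = 1 → ∀ i, i ≠ γ → φ u i ≤ 0 := by
    intro u hu he i hi
    obtain ⟨a, I, haI, h⟩ := aux_shape hφ hu
    have haγ : a = γ := by
      by_contra hc
      rw [h γ, if_neg (fun hh : γ = a => hc hh.symm)] at he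
      split_ifs at he <;> omega
    rw [h i, if_neg (fun hh : i = a => hi (hh.trans haγ))]
    split_ifs <;> omega
  have hterm : ∀ i : Fin N, i ∈ (Finset.univ : Finset (Fin N)) → 0 ≤ φ u1 i * φ u2 i := by
    intro i _
    by_cases hi : i = γ
    · subst hi; rw [e1, e2]; norm_num
    · exact mul_nonneg_of_nonpos_of_nonpos (hnonpos u1 h1 e1 i hi) (hnonpos u2 h2 e2 i hi)
  have hP : (1:ℤ) ≤ ∑ i, φ u1 i * φ u2 i := by
    have := Finset.single_le_sum hterm (Finset.mem_univ γ)
    rw [e1, e2] at this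
    linarith
  have hdp : diagPair (φ u1) (φ u2) ≤ -1 := by
    unfold diagPair; linarith
  rw [hq] at hdp
  unfold Plumbing.q at hdp
  rw [if_neg hne] at hdp
  split_ifs at hdp <;> omega



lemma aux_l_ne_v {G G' : Plumbing} {v l : ℕ} {fr : ℤ} (hG' : AttachLeaf G G' v l fr) :
    l ≠ v := fun h => hG'.l_new (h ▸ hG'.v_mem)

lemma aux_adj_l {G G' : Plumbing} {v l : ℕ} {fr : ℤ} (hG' : AttachLeaf G G' v l fr)
    {y : ℕ} (h : G'.adj l y = true) : y = v := by
  rcases (hG'.adj_iff l y).mp h with h1 | ⟨h1, -⟩ | ⟨-, h2⟩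
  · exact absurd (G.adj_support l y h1).1 hG'.l_new
  · exact absurd h1 (aux_l_ne_v hG')
  · exact h2

lemma aux_adj_notl {G G' : Plumbing} {v l : ℕ} {fr : ℤ} (hG' : AttachLeaf G G' v l fr)
    {a c : ℕ} (ha : a ≠ l) (hc : c ≠ l) (h : G'.adj a c = true) : G.adj a c = true := by
  rcases (hG'.adj_iff a c).mp h with h1 | ⟨-, h2⟩ | ⟨h2, -⟩
  · exact h1
  · exact absurd h2 hc
  · exact absurd h2 ha

lemma aux_walk_avoid {G G' : Plumbing} {v l : ℕ} {fr : ℤ} (hG' : AttachLeaf G G' v l fr) :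
    ∀ n (a b : ℕ) (p : G'.toSG.Walk a b), p.length ≤ n → a ≠ l → b ≠ l →
      ∃ q : G.toSG.Walk a b, ∀ x ∈ q.support, x ∈ p.support ∧ x ≠ l := by
  intro n
  induction n with
  | zero =>
    intro a b p hlen ha _
    cases p with
    | nil => exact ⟨SimpleGraph.Walk.nil, by simp [ha]⟩
    | cons h p' => simp [SimpleGraph.Walk.length_cons] at hlen
  | succ n ih =>
    intro a b p hlen ha hb
    cases p with
    | nil => exact ⟨SimpleGraph.Walk.nil, by simp [ha]⟩
    | @cons _ c _ h p' =>
      by_cases hc : c = l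
      · have hav : a = v := by
          refine aux_adj_l hG' (y := a) ?_
          rw [G'.adj_symm l a, ← hc]
          exact h
        cases p' with
        | nil => exact absurd hc hb
        | @cons _ c2 _ h2 p'' =>
          have hc2 : c2 = v := by
            refine aux_adj_l hG' (y := c2) ?_
            rw [← hc]
            exact h2
          obtain rfl : a = c2 := hav.trans hc2.symm
          have hlen'' : p''.length ≤ n := by
            simp [SimpleGraph.Walk.length_cons] at hlen; omega
          obtain ⟨q, hq⟩ := ih a b p'' hlen'' ha hb
          refine ⟨q, fun x hx => ?_⟩
          obtain ⟨h1, h2⟩ := hq x hx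
          refine ⟨?_, h2⟩
          simp only [SimpleGraph.Walk.support_cons, List.mem_cons]
          tauto
      · have hGadj : G.toSG.Adj a c := aux_adj_notl hG' ha hc h
        have hlen' : p'.length ≤ n := by
          simp [SimpleGraph.Walk.length_cons] at hlen; omega
        obtain ⟨q', hq'⟩ := ih c b p' hlen' hc hb
        refine ⟨SimpleGraph.Walk.cons hGadj q', fun x hx => ?_⟩
        rw [SimpleGraph.Walk.support_cons, List.mem_cons] at hx
        rcases hx with rfl | hx
        · exact ⟨by simp [SimpleGraph.Walk.support_cons], ha⟩
        · obtain ⟨h1, h2⟩ := hq' x hx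
          exact ⟨by simp [SimpleGraph.Walk.support_cons, h1], h2⟩

lemma aux_k0 {N : ℕ} {G : Plumbing} {φ : ℕ → Fin N → ℤ} (hφ : G.IsSEmb φ)
    {k : Fin N} (h2 : IsType2 G φ k) {v : ℕ} (hv : v ∈ G.verts) (hvk : φ v k = -1) :
    ∀ u ∈ G.verts, u ≠ v → φ u k = 0 := by
  intro u hu hune
  have hpos : (G.verts.filter fun w => φ w k = 1) = ∅ := Finset.card_eq_zero.mp h2.1
  have hne1 : φ u k ≠ 1 := by
    intro h
    have hmem : u ∈ (G.verts.filter fun w => φ w k = 1) := Finset.mem_filter.mpr ⟨hu, h⟩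
    rw [hpos] at hmem
    exact absurd hmem (Finset.notMem_empty u)
  have hnem1 : φ u k ≠ -1 := by
    intro h
    obtain ⟨w, hw⟩ := Finset.card_eq_one.mp h2.2
    have hvw : v ∈ ({w} : Finset ℕ) := hw ▸ Finset.mem_filter.mpr ⟨hv, hvk⟩
    have huw : u ∈ ({w} : Finset ℕ) := hw ▸ Finset.mem_filter.mpr ⟨hu, h⟩
    rw [Finset.mem_singleton] at hvw huw
    exact hune (huw.trans hvw.symm)
  rcases aux_entry hφ hu k with h | h | h
  · exact h
  · exact absurd h hne1
  · exact absurd h hnem1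

/-- Core: any linear relation `t • e_k + ∑ x u • φ u = 0` is trivial. -/
lemma aux_core {N : ℕ} (G : Plumbing) (hTree : G.IsTree)
    (φ : ℕ → Fin N → ℤ) (hφ : G.IsSEmb φ)
    (k : Fin N) (h2 : IsType2 G φ k)
    (v : ℕ) (hv : v ∈ G.verts) (hvk : φ v k = -1)
    (x : ℕ → ℤ) (t : ℤ)
    (hrel : ∀ i, t * eVec k i + ∑ u ∈ G.verts, x u * φ u i = 0) :
    (∀ u ∈ G.verts, x u = 0) ∧ t = 0 := by
  classical
  have hk0 := aux_k0 hφ h2 hv hvk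
  have hsum_k : ∀ (y : ℕ → ℤ), ∑ u ∈ G.verts, y u * φ u k = -(y v) := by
    intro y
    rw [Finset.sum_eq_single v]
    · rw [hvk]; ring
    · intro b hb hbv; rw [hk0 b hb hbv]; ring
    · intro h; exact absurd hv h
  -- t = x v
  have htv : t = x v := by
    have h := hrel k
    rw [aux_eVec_apply, if_pos rfl, hsum_k x] at h
    linarith
  -- modified vectors ψ
  set ψ : ℕ → Fin N → ℤ := fun u i => φ u i + (if u = v then eVec k i else 0) with hψ
  have hZ : ∀ i, ∑ u ∈ G.verts, x u * ψ u i = 0 := by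
    intro i
    have hsplit : ∑ u ∈ G.verts, x u * ψ u i
        = (∑ u ∈ G.verts, x u * φ u i) + ∑ u ∈ G.verts, (if u = v then x u * eVec k i else 0) := by
      rw [← Finset.sum_add_distrib]
      refine Finset.sum_congr rfl fun u _ => ?_
      by_cases h : u = v <;> simp [hψ, h, mul_add]
    rw [hsplit, Finset.sum_ite_eq' G.verts v (fun u => x u * eVec k i), if_pos hv]
    have hr := hrel i
    rw [htv] at hr
    linarith
  -- pairing values for ψ
  have hPphi : ∀ u ∈ G.verts, ∀ w ∈ G.verts, (∑ i, φ u i * φ w i) = -(G.q u w) := by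
    intro u hu w hw
    have h := hφ.pairing u hu w hw
    unfold diagPair at h
    linarith
  have hq_off : ∀ u w : ℕ, u ≠ w → G.q u w = if G.adj u w = true then 1 else 0 := by
    intro u w h; unfold Plumbing.q; rw [if_neg h]
  have hPψ_val : ∀ u ∈ G.verts, ∀ w ∈ G.verts, u ≠ w →
      (∑ i, ψ u i * ψ w i) = -(G.q u w) := by
    intro u hu w hw huw
    have hterm : ∀ i, ψ u i * ψ w i = φ u i * φ w i
        + ((if u = v then eVec k i * φ w i else 0)
        + (if w = v then φ u i * eVec k i else 0)) := by
      intro i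
      by_cases h1 : u = v <;> by_cases h2 : w = v
      · exact absurd (h1.trans h2.symm) huw
      · simp only [hψ, if_pos h1, if_neg h2, add_zero]; ring
      · simp only [hψ, if_neg h1, if_pos h2, zero_add, add_zero]; ring
      · simp [hψ, h1, h2]
    simp only [hterm, Finset.sum_add_distrib]
    rw [hPphi u hu w hw]
    have hc1 : (∑ i, if u = v then eVec k i * φ w i else 0) = 0 := by
      by_cases h1 : u = v
      · simp only [if_pos h1]
        rw [aux_sum_eVec_mul]
        exact hk0 w hw (fun h => huw (h1.trans h.symm))
      · simp [h1]
    have hc2 : (∑ i, if w = v then φ u i * eVec k i else 0) = 0 := by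
      by_cases h2 : w = v
      · simp only [if_pos h2]
        have hcomm : (∑ i, φ u i * eVec k i) = φ u k := by
          rw [Finset.sum_congr rfl (fun i _ => mul_comm (φ u i) (eVec k i))]
          exact aux_sum_eVec_mul k (φ u)
        rw [hcomm]
        exact hk0 u hu (fun h => huw (h.trans h2.symm))
      · simp [h2]
    rw [hc1, hc2]; ring
  have hPψ_nonpos : ∀ u ∈ G.verts, ∀ w ∈ G.verts, u ≠ w → (∑ i, ψ u i * ψ w i) ≤ 0 := by
    intro u hu w hw huw
    rw [hPψ_val u hu w hw huw, hq_off u w huw]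
    split_ifs <;> norm_num
  have hPψ_adj : ∀ u ∈ G.verts, ∀ w ∈ G.verts, G.adj u w = true → (∑ i, ψ u i * ψ w i) = -1 := by
    intro u hu w hw hadj
    have huw : u ≠ w := by
      intro h; subst h; rw [G.adj_irrefl u] at hadj; simp at hadj
    rw [hPψ_val u hu w hw huw, hq_off u w huw, if_pos hadj]
  -- d = |x|
  set d : ℕ → ℤ := fun u => |x u| with hd
  have hPWW : (∑ i, (∑ u ∈ G.verts, d u * ψ u i) * (∑ w ∈ G.verts, d w * ψ w i)) ≤ 0 := by
    rw [aux_expand]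
    have hzero : (∑ u ∈ G.verts, ∑ w ∈ G.verts, (x u * x w) * (∑ i, ψ u i * ψ w i)) = 0 := by
      rw [← aux_expand]
      simp only [hZ, mul_zero, Finset.sum_const_zero]
    calc (∑ u ∈ G.verts, ∑ w ∈ G.verts, (d u * d w) * (∑ i, ψ u i * ψ w i))
        ≤ ∑ u ∈ G.verts, ∑ w ∈ G.verts, (x u * x w) * (∑ i, ψ u i * ψ w i) := by
          refine Finset.sum_le_sum fun u hu => Finset.sum_le_sum fun w hw => ?_
          by_cases huw : u = w
          · subst huw
            have hdd : d u * d u = x u * x u := abs_mul_abs_self (x u)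
            rw [hdd]
          · have h1 : x u * x w ≤ d u * d w := by
              calc x u * x w ≤ |x u * x w| := le_abs_self _
                _ = d u * d w := abs_mul _ _
            exact mul_le_mul_of_nonpos_right h1 (hPψ_nonpos u hu w hw huw)
      _ = 0 := hzero
  -- W = 0
  have hW : ∀ i, (∑ u ∈ G.verts, d u * ψ u i) = 0 := by
    have hsq : ∀ i : Fin N, i ∈ (Finset.univ : Finset (Fin N)) →
        0 ≤ (∑ u ∈ G.verts, d u * ψ u i) * (∑ w ∈ G.verts, d w * ψ w i) :=
      fun i _ => mul_self_nonneg _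
    have hzz := (Finset.sum_eq_zero_iff_of_nonneg hsq).mp
      (le_antisymm hPWW (Finset.sum_nonneg hsq))
    intro i
    exact mul_self_eq_zero.mp (hzz i (Finset.mem_univ i))
  -- kernel equations
  have hker : ∀ w ∈ G.verts, ∑ u ∈ G.verts, d u * (∑ i, ψ u i * ψ w i) = 0 := by
    intro w hw
    have hswap : ∑ u ∈ G.verts, d u * (∑ i, ψ u i * ψ w i)
        = ∑ i, (∑ u ∈ G.verts, d u * ψ u i) * ψ w i := by
      simp only [Finset.mul_sum, Finset.sum_mul]
      rw [Finset.sum_comm]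
      exact Finset.sum_congr rfl fun u _ => Finset.sum_congr rfl fun i _ => by ring
    rw [hswap]
    simp only [hW, zero_mul, Finset.sum_const_zero]
  -- zero set closed under adjacency
  have hclosed : ∀ w ∈ G.verts, d w = 0 → ∀ u ∈ G.verts, G.adj u w = true → d u = 0 := by
    intro w hw hdw u hu hadj
    have hterms : ∀ u' ∈ G.verts, d u' * (∑ i, ψ u' i * ψ w i) ≤ 0 := by
      intro u' hu'
      by_cases h : u' = w
      · subst h; rw [hdw, zero_mul]
      · exact mul_nonpos_of_nonneg_of_nonpos (abs_nonneg _) (hPψ_nonpos u' hu' w hw h)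
    have hall := (Finset.sum_eq_zero_iff_of_nonpos hterms).mp (hker w hw)
    have hu' := hall u hu
    rw [hPψ_adj u hu w hw hadj] at hu'
    linarith
  -- propagation along walks
  have hprop : ∀ (a b : ℕ) (p : G.toSG.Walk a b),
      (∀ y ∈ p.support, y ∈ G.verts) → d a ≠ 0 → d b ≠ 0 := by
    intro a b p
    induction p with
    | nil => exact fun _ h => h
    | @cons a c b h p ih =>
      intro hsup ha
      have hac : a ∈ G.verts := hsup a (by simp [SimpleGraph.Walk.support_cons])
      have hcc : c ∈ G.verts := hsup c (by
        rw [SimpleGraph.Walk.support_cons]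
        exact List.mem_cons_of_mem _ p.start_mem_support)
      refine ih (fun y hy => hsup y (by
        rw [SimpleGraph.Walk.support_cons]
        exact List.mem_cons_of_mem _ hy)) ?_
      intro hc0
      exact ha (hclosed c hcc hc0 a hac h)
  by_cases hex : ∀ u ∈ G.verts, x u = 0
  · exact ⟨hex, by rw [htv, hex v hv]⟩
  · push_neg at hex
    obtain ⟨u0, hu0, hx0⟩ := hex
    exfalso
    have hdall : ∀ w ∈ G.verts, d w ≠ 0 := by
      intro w hw
      obtain ⟨p, hp⟩ := hTree.2 u0 hu0 w hw
      exact hprop u0 w p hp (by simpa [hd] using hx0)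
    -- full-graph sum
    obtain ⟨γ, I, hγI, hσ⟩ := hφ.subgraphSum G.verts Finset.Subset.rfl ⟨v, hv⟩ hTree.2
    have hsk : ∑ u ∈ G.verts, φ u k = -1 := by
      have h := hsum_k (fun _ => 1)
      simpa using h
    have hσk := congrFun hσ k
    rw [Finset.sum_apply, Pi.sub_apply, aux_eVec_apply, aux_sum_eVec_apply, hsk] at hσk
    have hkne : k ≠ γ := by
      intro h; rw [if_pos h] at hσk; split_ifs at hσk <;> omega
    have hkI : k ∈ I := by
      by_contra h; rw [if_neg hkne, if_neg h] at hσk; omega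
    have hσγ : ∑ u ∈ G.verts, φ u γ = 1 := by
      have h := congrFun hσ γ
      rw [Finset.sum_apply, Pi.sub_apply, aux_eVec_apply, aux_sum_eVec_apply,
        if_pos rfl, if_neg hγI, sub_zero] at h
      exact h
    have hWγ : ∑ u ∈ G.verts, d u * φ u γ = 0 := by
      have h := hW γ
      have he : eVec k γ = 0 := by
        rw [aux_eVec_apply, if_neg (fun hh : γ = k => hkne hh.symm)]
      calc ∑ u ∈ G.verts, d u * φ u γ = ∑ u ∈ G.verts, d u * ψ u γ := by
            refine Finset.sum_congr rfl fun u _ => ?_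
            by_cases h1 : u = v <;> simp [hψ, h1, he]
        _ = 0 := h
    set Pos := G.verts.filter (fun u => φ u γ = 1) with hPosDef
    set Neg := G.verts.filter (fun u => φ u γ = -1) with hNegDef
    have hcards : (Pos.card : ℤ) - (Neg.card : ℤ) = 1 := by
      have hsplit : ∑ u ∈ G.verts, φ u γ
          = (∑ u ∈ G.verts, if φ u γ = 1 then (1:ℤ) else 0)
            - (∑ u ∈ G.verts, if φ u γ = -1 then (1:ℤ) else 0) := by
        rw [← Finset.sum_sub_distrib]
        refine Finset.sum_congr rfl fun u hu => ?_
        rcases aux_entry hφ hu γ with h | h | h <;> rw [h] <;> norm_num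
      rw [hsplit, Finset.sum_boole, Finset.sum_boole] at hσγ
      exact_mod_cast hσγ
    have hdsplit : (∑ u ∈ Pos, d u) - (∑ u ∈ Neg, d u) = 0 := by
      have hsplit : ∑ u ∈ G.verts, d u * φ u γ
          = (∑ u ∈ G.verts, if φ u γ = 1 then d u else 0)
            - (∑ u ∈ G.verts, if φ u γ = -1 then d u else 0) := by
        rw [← Finset.sum_sub_distrib]
        refine Finset.sum_congr rfl fun u hu => ?_
        rcases aux_entry hφ hu γ with h | h | h <;> rw [h] <;> simp
      rw [hsplit] at hWγ
      rw [hPosDef, hNegDef, Finset.sum_filter, Finset.sum_filter]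
      exact hWγ
    have hd1 : ∀ u ∈ G.verts, 1 ≤ d u := by
      intro u hu
      have h1 := hdall u hu
      have h2 : 0 ≤ d u := abs_nonneg (x u)
      omega
    have hsumPos : (Pos.card : ℤ) ≤ ∑ u ∈ Pos, d u := by
      calc (Pos.card : ℤ) = ∑ _u ∈ Pos, 1 := by simp
        _ ≤ ∑ u ∈ Pos, d u := Finset.sum_le_sum fun u hu =>
            hd1 u (Finset.mem_of_mem_filter u hu)
    have hsumNeg : (Neg.card : ℤ) ≤ ∑ u ∈ Neg, d u := by
      calc (Neg.card : ℤ) = ∑ _u ∈ Neg, 1 := by simp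
        _ ≤ ∑ u ∈ Neg, d u := Finset.sum_le_sum fun u hu =>
            hd1 u (Finset.mem_of_mem_filter u hu)
    have hNegNe : Neg.Nonempty := by
      rw [Finset.nonempty_iff_ne_empty]
      intro h
      rw [h] at hdsplit hcards
      simp only [Finset.sum_empty, Finset.card_empty, Nat.cast_zero, sub_zero] at hdsplit hcards
      omega
    have hPos2 : 1 < Pos.card := by
      have h1 : 1 ≤ Neg.card := Finset.card_pos.mpr hNegNe
      have h2 : (1:ℤ) ≤ (Neg.card : ℤ) := by exact_mod_cast h1
      have : (1:ℤ) < (Pos.card : ℤ) := by omega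
      exact_mod_cast this
    obtain ⟨u1, hu1, u2, hu2, hne⟩ := Finset.one_lt_card.mp hPos2
    rw [hPosDef, Finset.mem_filter] at hu1 hu2
    exact aux_no_shared_pos hφ hu1.1 hu2.1 hne hu1.2 hu2.2

end Aux

/-- STATEMENT 4: attaching a new `(-1)`-framed leaf `l` at the unique vertex `v`
carrying a type 2 basis element `e k`, and extending the s-embedding by
`l ↦ e k`, yields a negative definite graph with an s-embedding. -/
theorem stmt4_extend {N : ℕ} (G G' : Plumbing) (hTree : G.IsTree)
    (hNeg : G.NegDef) (φ : ℕ → Fin N → ℤ) (hφ : G.IsSEmb φ)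
    (k : Fin N) (h2 : IsType2 G φ k)
    (v : ℕ) (hv : v ∈ G.verts) (hvk : φ v k = -1)
    (l : ℕ) (hG' : AttachLeaf G G' v l (-1)) :
    G'.NegDef ∧ G'.IsSEmb (Function.update φ l (eVec k)) := by
  classical
  set φ' := Function.update φ l (eVec k) with hφ'def
  have hlV : l ∉ G.verts := hG'.l_new
  have hlv : l ≠ v := aux_l_ne_v hG'
  have hφ'mem : ∀ u ∈ G.verts, φ' u = φ u := fun u hu =>
    Function.update_of_ne (fun h : u = l => hlV (by rw [← h]; exact hu)) _ _
  have hφ'l : φ' l = eVec k := Function.update_self l _ φ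
  have hk0 := aux_k0 hφ h2 hv hvk
  -- q' facts
  have hq'VV : ∀ u ∈ G.verts, ∀ w ∈ G.verts, G'.q u w = G.q u w := by
    intro u hu w hw
    unfold Plumbing.q
    by_cases h : u = w
    · rw [if_pos h, if_pos h, hG'.framing_other u hu]
    · rw [if_neg h, if_neg h]
      have hiff : (G'.adj u w = true) ↔ (G.adj u w = true) := by
        constructor
        · intro hh
          rcases (hG'.adj_iff u w).mp hh with h1 | ⟨-, h1⟩ | ⟨h1, -⟩
          · exact h1
          · exact absurd h1 (fun hh2 => hlV (hh2 ▸ hw))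
          · exact absurd h1 (fun hh2 => hlV (hh2 ▸ hu))
        · intro hh; exact (hG'.adj_iff u w).mpr (Or.inl hh)
      by_cases ha : G.adj u w = true
      · rw [if_pos (hiff.mpr ha), if_pos ha]
      · rw [if_neg (fun hh => ha (hiff.mp hh)), if_neg ha]
  have hadjlv : G'.adj l v = true := (hG'.adj_iff l v).mpr (Or.inr (Or.inr ⟨rfl, rfl⟩))
  have hadjvl : G'.adj v l = true := by rw [G'.adj_symm]; exact hadjlv
  have hq'lw : ∀ w ∈ G.verts, G'.q l w = if w = v then 1 else 0 := by
    intro w hw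
    unfold Plumbing.q
    rw [if_neg (fun h : l = w => hlV (by rw [h]; exact hw))]
    by_cases h : w = v
    · subst h; rw [if_pos hadjlv, if_pos rfl]
    · rw [if_neg h, if_neg (fun hh => h (aux_adj_l hG' hh))]
  have hq'wl : ∀ w ∈ G.verts, G'.q w l = if w = v then 1 else 0 := by
    intro w hw
    unfold Plumbing.q
    rw [if_neg (fun h : w = l => hlV (h ▸ hw))]
    by_cases h : w = v
    · subst h; rw [if_pos hadjvl, if_pos rfl]
    · rw [if_neg h, if_neg]
      intro hh
      have hh' : G'.adj l w = true := by rw [G'.adj_symm]; exact hh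
      exact h (aux_adj_l hG' hh')
  have hq'll : G'.q l l = -1 := by
    unfold Plumbing.q; rw [if_pos rfl, hG'.framing_l]
  -- diagPair values against eVec k
  have hdp_e : ∀ y : Fin N → ℤ, diagPair (eVec k) y = -(y k) := by
    intro y; unfold diagPair; rw [aux_sum_eVec_mul]
  have hdp_e' : ∀ y : Fin N → ℤ, diagPair y (eVec k) = -(y k) := by
    intro y; unfold diagPair
    rw [Finset.sum_congr rfl (fun i _ => mul_comm (y i) (eVec k i)), aux_sum_eVec_mul]
  have hkk : eVec k k = 1 := by rw [aux_eVec_apply, if_pos rfl]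
  -- pairing for G'
  have hpair' : ∀ u ∈ G'.verts, ∀ w ∈ G'.verts, diagPair (φ' u) (φ' w) = G'.q u w := by
    intro u hu w hw
    rw [hG'.verts_eq, Finset.mem_insert] at hu hw
    rcases hu with rfl | hu
    · rcases hw with rfl | hw
      · rw [hφ'l, hq'll, hdp_e (eVec k), hkk]
      · rw [hφ'l, hφ'mem w hw, hq'lw w hw, hdp_e]
        by_cases h : w = v
        · subst h; rw [hvk, if_pos rfl]; norm_num
        · rw [hk0 w hw h, if_neg h]; norm_num
    · rcases hw with rfl | hw
      · rw [hφ'mem u hu, hφ'l, hq'wl u hu, hdp_e']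
        by_cases h : u = v
        · subst h; rw [hvk, if_pos rfl]; norm_num
        · rw [hk0 u hu h, if_neg h]; norm_num
      · rw [hφ'mem u hu, hφ'mem w hw, hq'VV u hu w hw]
        exact hφ.pairing u hu w hw
  -- core vanishing
  have hcore : ∀ x : ℕ → ℤ, (∀ i, ∑ u ∈ G'.verts, x u * φ' u i = 0) →
      ∀ u ∈ G'.verts, x u = 0 := by
    intro x hz
    have hrel : ∀ i, x l * eVec k i + ∑ u ∈ G.verts, x u * φ u i = 0 := by
      intro i
      have h := hz i
      rw [hG'.verts_eq, Finset.sum_insert hlV, hφ'l,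
        Finset.sum_congr rfl (fun u hu => by rw [hφ'mem u hu])] at h
      exact h
    obtain ⟨hall, hl0⟩ := aux_core G hTree φ hφ k h2 v hv hvk x (x l) hrel
    intro u hu
    rw [hG'.verts_eq, Finset.mem_insert] at hu
    rcases hu with rfl | hu
    · exact hl0
    · exact hall u hu
  -- negative definiteness
  have hNegDef : G'.NegDef := by
    intro x hx
    obtain ⟨w, hw, hxw⟩ := hx
    have hQ := aux_QF_diag G' φ' hpair' x
    have hle : G'.QF x x ≤ 0 := by
      rw [hQ]
      have hnn : 0 ≤ ∑ i, (∑ u ∈ G'.verts, x u * φ' u i) * (∑ u ∈ G'.verts, x u * φ' u i) :=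
        Finset.sum_nonneg fun i _ => mul_self_nonneg _
      linarith
    rcases lt_or_eq_of_le hle with h | h
    · exact h
    · exfalso
      have h0 : (∑ i, (∑ u ∈ G'.verts, x u * φ' u i) * (∑ u ∈ G'.verts, x u * φ' u i)) = 0 := by
        rw [hQ] at h
        linarith
      have hzz : ∀ i, ∑ u ∈ G'.verts, x u * φ' u i = 0 := by
        have hsq : ∀ i : Fin N, i ∈ (Finset.univ : Finset (Fin N)) →
            0 ≤ (∑ u ∈ G'.verts, x u * φ' u i) * (∑ u ∈ G'.verts, x u * φ' u i) :=
          fun i _ => mul_self_nonneg _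
        intro i
        exact mul_self_eq_zero.mp ((Finset.sum_eq_zero_iff_of_nonneg hsq).mp h0 i (Finset.mem_univ i))
      exact hxw (hcore x hzz w hw)
  -- linear independence
  have hindep : LinearIndependent ℤ (fun j : {y // y ∈ G'.verts} => φ' j.val) := by
    rw [Fintype.linearIndependent_iff]
    intro g hg
    set x : ℕ → ℤ := fun u => if h : u ∈ G'.verts then g ⟨u, h⟩ else 0 with hxdef
    have hxg : ∀ j : {y // y ∈ G'.verts}, x j.val = g j := by
      intro j
      rw [hxdef]
      simp only [j.2, dif_pos]
    have hz : ∀ i, ∑ u ∈ G'.verts, x u * φ' u i = 0 := by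
      intro i
      have h1 : ∑ u ∈ G'.verts, x u * φ' u i
          = ∑ j : {y // y ∈ G'.verts}, x j.val * φ' j.val i :=
        (Finset.sum_coe_sort G'.verts (fun u => x u * φ' u i)).symm
      rw [h1, Finset.sum_congr rfl (fun j _ => by rw [hxg j])]
      have h3 := congrFun hg i
      rw [Finset.sum_apply] at h3
      simpa using h3
    intro j
    rw [← hxg j]
    exact hcore x hz j.val j.2
  -- subgraph sums
  have hsub : ∀ S : Finset ℕ, S ⊆ G'.verts → S.Nonempty → G'.ConnOn S →
      ∃ (γ : Fin N) (I : Finset (Fin N)), γ ∉ I ∧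
        (∑ u ∈ S, φ' u) = eVec γ - ∑ j ∈ I, eVec j := by
    intro S hS hSne hconn
    by_cases hlS : l ∈ S
    · set S₀ := S.erase l with hS0
      have hS0V : S₀ ⊆ G.verts := by
        intro a ha
        have h1 := Finset.mem_of_mem_erase ha
        have h2' := Finset.ne_of_mem_erase ha
        have h3 := hS h1
        rw [hG'.verts_eq, Finset.mem_insert] at h3
        tauto
      rcases S₀.eq_empty_or_nonempty with hemp | hne0
      · have hSl : S = {l} := by
          apply Finset.eq_singleton_iff_unique_mem.mpr
          refine ⟨hlS, fun y hy => ?_⟩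
          by_contra hne
          exact (Finset.notMem_empty y) (hemp ▸ Finset.mem_erase.mpr ⟨hne, hy⟩)
        refine ⟨k, ∅, Finset.notMem_empty k, ?_⟩
        rw [hSl, Finset.sum_singleton, hφ'l, Finset.sum_empty, sub_zero]
      · obtain ⟨u0, hu0⟩ := hne0
        have hu0S : u0 ∈ S := Finset.mem_of_mem_erase hu0
        have hu0l : u0 ≠ l := Finset.ne_of_mem_erase hu0
        have hvS0 : v ∈ S₀ := by
          obtain ⟨p, hp⟩ := hconn l hlS u0 hu0S
          cases p with
          | nil => exact absurd rfl hu0l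
          | @cons _ c _ h p' =>
            have hcv : c = v := aux_adj_l hG' h
            have hcS : c ∈ S := hp c (by
              rw [SimpleGraph.Walk.support_cons]
              exact List.mem_cons_of_mem _ p'.start_mem_support)
            exact Finset.mem_erase.mpr ⟨Ne.symm (aux_l_ne_v hG'), hcv ▸ hcS⟩
        have hconn0 : G.ConnOn S₀ := by
          intro a ha b hb
          obtain ⟨p, hp⟩ := hconn a (Finset.mem_of_mem_erase ha) b (Finset.mem_of_mem_erase hb)
          obtain ⟨qq, hq⟩ := aux_walk_avoid hG' p.length a b p le_rfl
            (Finset.ne_of_mem_erase ha) (Finset.ne_of_mem_erase hb)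
          refine ⟨qq, fun y hy => ?_⟩
          obtain ⟨h1, h2'⟩ := hq y hy
          exact Finset.mem_erase.mpr ⟨h2', hp y h1⟩
        obtain ⟨γ, I, hγI, hσ⟩ := hφ.subgraphSum S₀ hS0V ⟨u0, hu0⟩ hconn0
        have hsk : ∑ u ∈ S₀, φ u k = -1 := by
          rw [Finset.sum_eq_single v]
          · exact hvk
          · intro b hb hbv; exact hk0 b (hS0V hb) hbv
          · intro h; exact absurd hvS0 h
        have hσk := congrFun hσ k
        rw [Finset.sum_apply, Pi.sub_apply, aux_eVec_apply, aux_sum_eVec_apply, hsk] at hσk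
        have hkγ : ¬(k = γ) := by
          intro h; rw [if_pos h] at hσk; split_ifs at hσk <;> omega
        have hkI : k ∈ I := by
          by_contra h; rw [if_neg hkγ, if_neg h] at hσk; omega
        refine ⟨γ, I.erase k, fun h => hγI (Finset.mem_of_mem_erase h), ?_⟩
        have hSins : S = insert l S₀ := (Finset.insert_erase hlS).symm
        rw [hSins, Finset.sum_insert (Finset.notMem_erase l S), hφ'l,
          Finset.sum_congr rfl (fun u hu => hφ'mem u (hS0V hu)), hσ,
          ← Finset.add_sum_erase I eVec hkI]
        abel
    · have hSV : S ⊆ G.verts := by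
        intro a ha
        have h3 := hS ha
        rw [hG'.verts_eq, Finset.mem_insert] at h3
        rcases h3 with rfl | h3
        · exact absurd ha hlS
        · exact h3
      have hconnG : G.ConnOn S := by
        intro a ha b hb
        obtain ⟨p, hp⟩ := hconn a ha b hb
        obtain ⟨qq, hq⟩ := aux_walk_avoid hG' p.length a b p le_rfl
          (fun h => hlS (h ▸ ha)) (fun h => hlS (h ▸ hb))
        exact ⟨qq, fun y hy => hp y (hq y hy).1⟩
      obtain ⟨γ, I, hγI, hσ⟩ := hφ.subgraphSum S hSV hSne hconnG
      refine ⟨γ, I, hγI, ?_⟩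
      rw [Finset.sum_congr rfl (fun u hu => hφ'mem u (hSV hu))]
      exact hσ
  exact ⟨hNegDef, ⟨hpair', hindep, hsub⟩⟩
end

section
/- Let Γ be a nonempty negative definite plumbing tree in which every vertex has framing at most −2 (i.e. Γ is minimal). If Γ admits an s-embedding φ, then φ has a basis element of type 2. Equivalently, the only minimal plumbing tree admitting an s-embedding without basis elements of type 2 is the empty graph. -/
open Finset

open Plumbing

section Stmt7Aux

private lemma sum_le_neg_two' {α : Type*} [DecidableEq α] {T : Finset α} {g : α → ℤ}
    (hg : ∀ v ∈ T, g v ≤ 0) {y z : α} (hy : y ∈ T) (hz : z ∈ T) (hyz : y ≠ z)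
    (h1 : g y = -1) (h2 : g z = -1) : ∑ v ∈ T, g v ≤ -2 := by
  have hzy : z ∈ T.erase y := Finset.mem_erase.mpr ⟨Ne.symm hyz, hz⟩
  have e1 : g y + ∑ v ∈ T.erase y, g v = ∑ v ∈ T, g v := Finset.add_sum_erase T g hy
  have e2 : g z + ∑ v ∈ (T.erase y).erase z, g v = ∑ v ∈ T.erase y, g v :=
    Finset.add_sum_erase _ g hzy
  have e3 : ∑ v ∈ (T.erase y).erase z, g v ≤ 0 :=
    Finset.sum_nonpos (fun v hv => hg v (Finset.mem_of_mem_erase (Finset.mem_of_mem_erase hv)))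
  rw [← e1, ← e2, h1, h2]
  linarith

private lemma shape_apply' {N : ℕ} {γ : Fin N} {I : Finset (Fin N)} (hγ : γ ∉ I) (k : Fin N) :
    (eVec γ - ∑ j ∈ I, eVec j) k = if k = γ then 1 else if k ∈ I then -1 else 0 := by
  have h1 : (∑ j ∈ I, eVec j) k = if k ∈ I then 1 else 0 := by
    rw [Finset.sum_apply]
    have hterm : ∀ j ∈ I, eVec j k = if k = j then (1:ℤ) else 0 := by
      intro j _; simp [eVec, Pi.single_apply]
    rw [Finset.sum_congr rfl hterm, Finset.sum_ite_eq I k (fun _ => (1:ℤ))]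
  have h2 : eVec γ k = if k = γ then (1:ℤ) else 0 := by simp [eVec, Pi.single_apply]
  rw [Pi.sub_apply, h1, h2]
  by_cases hkγ : k = γ
  · subst hkγ; simp [hγ]
  · by_cases hkI : k ∈ I <;> simp [hkγ, hkI]

private def chainWalk (G' : SimpleGraph ℕ) (x : ℕ → ℕ) (hadj : ∀ i, G'.Adj (x i) (x (i+1)))
    (a : ℕ) : (t : ℕ) → G'.Walk (x a) (x (a + t))
  | 0 => SimpleGraph.Walk.nil
  | (t+1) => (chainWalk G' x hadj a t).concat (hadj (a + t))

private lemma chainWalk_length (G' : SimpleGraph ℕ) (x : ℕ → ℕ)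
    (hadj : ∀ i, G'.Adj (x i) (x (i+1))) (a : ℕ) :
    ∀ t, (chainWalk G' x hadj a t).length = t
  | 0 => rfl
  | (t+1) => by
      simp only [chainWalk, SimpleGraph.Walk.length_concat,
        chainWalk_length G' x hadj a t]

private lemma chainWalk_support (G' : SimpleGraph ℕ) (x : ℕ → ℕ)
    (hadj : ∀ i, G'.Adj (x i) (x (i+1))) (a : ℕ) :
    ∀ t, (chainWalk G' x hadj a t).support = (List.range (t+1)).map (fun s => x (a + s))
  | 0 => by simp [chainWalk, List.range_succ]
  | (t+1) => by
      simp only [chainWalk, SimpleGraph.Walk.support_concat,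
        chainWalk_support G' x hadj a t]
      rw [List.range_succ (n := t+1)]
      simp [List.concat_eq_append, Nat.add_assoc]

private lemma no_sigma_cycle (G' : SimpleGraph ℕ) (hac : G'.IsAcyclic) (S : Finset ℕ)
    (y₀ : ℕ) (hy₀ : y₀ ∈ S) (σ : ℕ → ℕ) (hmem : ∀ y ∈ S, σ y ∈ S)
    (hadj : ∀ y ∈ S, G'.Adj y (σ y)) (h2 : ∀ y ∈ S, σ (σ y) ≠ y) : False := by
  classical
  set x : ℕ → ℕ := fun i => σ^[i] y₀ with hxdef
  have hxsucc : ∀ i, x (i+1) = σ (x i) := by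
    intro i; simp only [hxdef]; rw [Function.iterate_succ_apply']
  have hxmem : ∀ i, x i ∈ S := by
    intro i
    induction i with
    | zero => exact hy₀
    | succ i ih => rw [hxsucc]; exact hmem _ ih
  have hxadj : ∀ i, G'.Adj (x i) (x (i+1)) := by
    intro i; rw [hxsucc]; exact hadj _ (hxmem i)
  have hrep : ∃ i j : ℕ, i ≠ j ∧ x i = x j := by
    obtain ⟨i, j, hij, hxij⟩ :=
      Finite.exists_ne_map_eq_of_infinite (fun i : ℕ => (⟨x i, hxmem i⟩ : {v // v ∈ S}))
    exact ⟨i, j, hij, by simpa using congrArg Subtype.val hxij⟩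
  set Λ : Set ℕ := {m | 0 < m ∧ ∃ i, x (i + m) = x i} with hΛ
  have hΛne : Λ.Nonempty := by
    obtain ⟨i, j, hij, hxij⟩ := hrep
    rcases Nat.lt_or_ge i j with h | h
    · exact ⟨j - i, by omega, i, by rw [show i + (j - i) = j by omega]; exact hxij.symm⟩
    · have hji : j < i := by omega
      exact ⟨i - j, by omega, j, by rw [show j + (i - j) = i by omega]; exact hxij⟩
  obtain ⟨hmpos, i, hper⟩ := Nat.sInf_mem hΛne
  set m := sInf Λ with hm
  have hgap : ∀ s t : ℕ, s < t → t - s < m → x s ≠ x t := by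
    intro s t hst hlt heq
    have hmem' : t - s ∈ Λ := ⟨by omega, s, by rw [show s + (t - s) = t by omega]; exact heq.symm⟩
    exact absurd (Nat.sInf_le hmem') (by omega)
  by_cases hm1 : m = 1
  · rw [hm1] at hper
    have h := hxadj i
    rw [hper] at h
    exact G'.loopless.irrefl _ h
  by_cases hm2 : m = 2
  · rw [hm2] at hper
    have hE : x (i + 2) = σ (σ (x i)) := by
      rw [show i + 2 = (i + 1) + 1 by omega, hxsucc (i+1), hxsucc i]
    rw [hE] at hper
    exact h2 _ (hxmem i) hper
  have hm3 : 3 ≤ m := by omega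
  have harith : (i + 1) + (m - 1) = i + m := by omega
  have hend : x ((i + 1) + (m - 1)) = x i := by rw [harith]; exact hper
  let W : G'.Walk (x (i+1)) (x i) := (chainWalk G' x hxadj (i+1) (m-1)).copy rfl hend
  have hWlen : W.length = m - 1 := by
    show ((chainWalk G' x hxadj (i+1) (m-1)).copy rfl hend).length = m - 1
    rw [SimpleGraph.Walk.length_copy, chainWalk_length]
  have hWsupp : W.support = (List.range m).map (fun s => x (i+1+s)) := by
    show ((chainWalk G' x hxadj (i+1) (m-1)).copy rfl hend).support = _
    rw [SimpleGraph.Walk.support_copy, chainWalk_support]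
    congr 2
    omega
  have hWnodup : W.support.Nodup := by
    rw [hWsupp]
    refine List.Nodup.map_on ?_ List.nodup_range
    intro s hs t ht hst
    rw [List.mem_range] at hs ht
    by_contra hne
    rcases Nat.lt_or_ge s t with h | h
    · exact hgap (i+1+s) (i+1+t) (by omega) (by omega) (by rw [hst])
    · have hts : t < s := by omega
      exact hgap (i+1+t) (i+1+s) (by omega) (by omega) (by rw [hst])
  let P : G'.Path (x (i+1)) (x i) := ⟨W, (SimpleGraph.Walk.isPath_def W).mpr hWnodup⟩
  have hQadj : G'.Adj (x (i+1)) (x i) := (hxadj i).symm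
  have hPQ := SimpleGraph.isAcyclic_iff_path_unique.mp hac P (SimpleGraph.Path.singleton hQadj)
  have h1 : P.val.length = (SimpleGraph.Path.singleton hQadj).val.length := by rw [hPQ]
  have h2' : (SimpleGraph.Path.singleton hQadj).val.length = 1 := rfl
  have h3 : P.val.length = m - 1 := hWlen
  omega

end Stmt7Aux


/-- STATEMENT 7: a nonempty minimal (all framings `≤ -2`) negative definite
plumbing tree admitting an s-embedding has a basis element of type 2. -/
theorem stmt7_minimal {N : ℕ} (G : Plumbing) (hTree : G.IsTree) (hNeg : G.NegDef)
    (hne : G.verts.Nonempty) (hmin : ∀ v ∈ G.verts, G.framing v ≤ -2)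
    (φ : ℕ → Fin N → ℤ) (hφ : G.IsSEmb φ) :
    ∃ k : Fin N, IsType2 G φ k := by
  classical
  by_contra hcon
  push_neg at hcon
  obtain ⟨v₀, hv₀⟩ := hne
  -- Step 1: shapes of single-vertex images
  have hsing : ∀ v ∈ G.verts, ∃ (γ' : Fin N) (I' : Finset (Fin N)),
      γ' ∉ I' ∧ φ v = eVec γ' - ∑ j ∈ I', eVec j := by
    intro v hv
    have hconn : G.ConnOn {v} := by
      intro a ha b hb
      rw [Finset.mem_singleton] at ha hb
      subst ha; subst hb
      exact ⟨SimpleGraph.Walk.nil, by simp⟩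
    obtain ⟨γ', I', h1, h2⟩ := hφ.subgraphSum {v} (Finset.singleton_subset_iff.mpr hv)
      (Finset.singleton_nonempty v) hconn
    rw [Finset.sum_singleton] at h2
    exact ⟨γ', I', h1, h2⟩
  obtain ⟨γ₀, I₀, hγI₀, -⟩ := hsing v₀ hv₀
  have hchoice : ∀ v, ∃ (γ' : Fin N) (I' : Finset (Fin N)),
      v ∈ G.verts → (γ' ∉ I' ∧ φ v = eVec γ' - ∑ j ∈ I', eVec j) := by
    intro v
    by_cases hv : v ∈ G.verts
    · obtain ⟨a, b, c, d⟩ := hsing v hv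
      exact ⟨a, b, fun _ => ⟨c, d⟩⟩
    · exact ⟨γ₀, I₀, fun h => absurd h hv⟩
  choose ga Ia hga using hchoice
  have hval : ∀ v ∈ G.verts, ∀ k : Fin N,
      φ v k = if k = ga v then 1 else if k ∈ Ia v then -1 else 0 := by
    intro v hv k
    rw [(hga v hv).2]
    exact shape_apply' (hga v hv).1 k
  have hval_ga : ∀ v ∈ G.verts, φ v (ga v) = 1 := by
    intro v hv; rw [hval v hv]; simp
  have hval_one : ∀ v ∈ G.verts, ∀ k, φ v k = 1 → k = ga v := by
    intro v hv k h
    rw [hval v hv] at h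
    by_contra hne'
    rw [if_neg hne'] at h
    split_ifs at h <;> omega
  have hval_neg : ∀ v ∈ G.verts, ∀ k, k ∈ Ia v → φ v k = -1 := by
    intro v hv k hk
    have hne' : ¬ k = ga v := fun h => (hga v hv).1 (by rw [← h]; exact hk)
    rw [hval v hv, if_neg hne', if_pos hk]
  have hval_nonpos : ∀ v ∈ G.verts, ∀ k, φ v k ≠ 1 → φ v k ≤ 0 := by
    intro v hv k h
    rw [hval v hv] at h ⊢
    split_ifs at h ⊢ <;> omega
  -- CORE contradiction engine: a connected set, a coordinate with two -1's and no +1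
  have hcore : ∀ T : Finset ℕ, T ⊆ G.verts → T.Nonempty → G.ConnOn T → ∀ k : Fin N,
      (∀ v ∈ T, φ v k ≠ 1) → ∀ y ∈ T, ∀ z ∈ T, y ≠ z → φ y k = -1 → φ z k = -1 → False := by
    intro T hTsub hTne hTconn k hno1 y hy z hz hyz hyk hzk
    obtain ⟨γ', I', hγ', hsum⟩ := hφ.subgraphSum T hTsub hTne hTconn
    have h1 : (∑ v ∈ T, φ v) k = if k = γ' then 1 else if k ∈ I' then -1 else 0 := by
      rw [hsum]; exact shape_apply' hγ' k
    have h2 : (-1 : ℤ) ≤ (∑ v ∈ T, φ v) k := by rw [h1]; split_ifs <;> norm_num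
    have h3 : (∑ v ∈ T, φ v) k = ∑ v ∈ T, φ v k := Finset.sum_apply k T φ
    have h4 : ∑ v ∈ T, φ v k ≤ -2 :=
      sum_le_neg_two' (fun v hv => hval_nonpos v (hTsub hv) k (hno1 v hv)) hy hz hyz hyk hzk
    rw [h3] at h2
    linarith
  -- every coordinate with a -1 has a +1 somewhere (else it would be type 2)
  have hL6 : ∀ k : Fin N, ∀ v ∈ G.verts, φ v k = -1 → ∃ c ∈ G.verts, φ c k = 1 := by
    intro k v hv hvk
    by_contra hc
    push_neg at hc
    have huniq : ∀ z ∈ G.verts, φ z k = -1 → z = v := by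
      intro z hz hzk
      by_contra hne'
      exact hcore G.verts (le_refl _) ⟨v, hv⟩ hTree.2 k hc z hz v hv hne' hzk hvk
    refine hcon k ⟨?_, ?_⟩
    · show (G.verts.filter fun u => φ u k = 1).card = 0
      rw [Finset.card_eq_zero, Finset.filter_eq_empty_iff]
      intro c hcm
      exact hc c hcm
    · show (G.verts.filter fun u => φ u k = -1).card = 1
      rw [Finset.card_eq_one]
      refine ⟨v, ?_⟩
      rw [Finset.eq_singleton_iff_unique_mem]
      refine ⟨Finset.mem_filter.mpr ⟨hv, hvk⟩, fun z hzf => ?_⟩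
      obtain ⟨hz1, hz2⟩ := Finset.mem_filter.mp hzf
      exact huniq z hz1 hz2
  -- each Ia v is nonempty (framing ≤ -2)
  have hIane : ∀ v ∈ G.verts, (Ia v).Nonempty := by
    intro v hv
    rw [Finset.nonempty_iff_ne_empty]
    intro hIe
    have hpair := hφ.pairing v hv v hv
    have hq : G.q v v = G.framing v := by unfold Plumbing.q; rw [if_pos rfl]
    have hdp : diagPair (φ v) (φ v) = -1 := by
      unfold diagPair
      have hterm : ∀ k : Fin N, φ v k * φ v k = if k = ga v then 1 else 0 := by
        intro k
        by_cases h1 : k = ga v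
        · rw [hval v hv k, hIe, if_pos h1, if_pos h1]; norm_num
        · rw [hval v hv k, hIe, if_neg h1, if_neg (Finset.notMem_empty k), if_neg h1]
          norm_num
      rw [Finset.sum_congr rfl (fun k _ => hterm k),
        Finset.sum_ite_eq' Finset.univ (ga v) (fun _ => (1:ℤ))]
      simp
    rw [hpair, hq] at hdp
    have hm2 := hmin v hv
    omega
  -- connectivity of walk supports
  have hconnSupp : ∀ (a b : ℕ) (p : G.toSG.Walk a b),
      (∀ x ∈ p.support, x ∈ G.verts) → G.ConnOn p.support.toFinset := by
    intro a b p hp xx hxx yy hyy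
    rw [List.mem_toFinset] at hxx hyy
    refine ⟨(p.takeUntil xx hxx).reverse.append (p.takeUntil yy hyy), ?_⟩
    intro z hz
    rw [SimpleGraph.Walk.mem_support_append_iff] at hz
    rw [List.mem_toFinset]
    rcases hz with hz | hz
    · rw [SimpleGraph.Walk.support_reverse, List.mem_reverse] at hz
      exact SimpleGraph.Walk.support_takeUntil_subset p hxx hz
    · exact SimpleGraph.Walk.support_takeUntil_subset p hyy hz
  -- connectivity of adjacent pairs
  have hpairConn : ∀ y z : ℕ, G.toSG.Adj y z → G.ConnOn {y, z} := by
    intro y z hadj' a ha b hb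
    rw [Finset.mem_insert, Finset.mem_singleton] at ha hb
    rcases ha with rfl | rfl <;> rcases hb with rfl | rfl
    · exact ⟨SimpleGraph.Walk.nil, by intro xq hxq; simp at hxq; simp [hxq]⟩
    · refine ⟨SimpleGraph.Walk.cons hadj' SimpleGraph.Walk.nil, ?_⟩
      intro xq hxq
      simp only [SimpleGraph.Walk.support_cons, SimpleGraph.Walk.support_nil,
        List.mem_cons, List.mem_singleton] at hxq
      simp only [Finset.mem_insert, Finset.mem_singleton]
      tauto
    · refine ⟨SimpleGraph.Walk.cons hadj'.symm SimpleGraph.Walk.nil, ?_⟩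
      intro xq hxq
      simp only [SimpleGraph.Walk.support_cons, SimpleGraph.Walk.support_nil,
        List.mem_cons, List.mem_singleton] at hxq
      simp only [Finset.mem_insert, Finset.mem_singleton]
      tauto
    · exact ⟨SimpleGraph.Walk.nil, by intro xq hxq; simp at hxq; simp [hxq]⟩
  -- minimal walk length within verts
  let μ : ℕ → ℕ → ℕ := fun y u =>
    sInf {n | ∃ p : G.toSG.Walk y u, p.length = n ∧ ∀ x ∈ p.support, x ∈ G.verts}
  have hμspec : ∀ y ∈ G.verts, ∀ u ∈ G.verts,
      ∃ p : G.toSG.Walk y u, p.length = μ y u ∧ ∀ x ∈ p.support, x ∈ G.verts := by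
    intro y hy u hu
    obtain ⟨p, hp⟩ := hTree.2 y hy u hu
    have hne' : {n | ∃ p : G.toSG.Walk y u, p.length = n ∧ ∀ x ∈ p.support, x ∈ G.verts}.Nonempty :=
      ⟨p.length, ⟨p, rfl, hp⟩⟩
    exact Nat.sInf_mem hne'
  have hμle : ∀ y u : ℕ, ∀ p : G.toSG.Walk y u,
      (∀ x ∈ p.support, x ∈ G.verts) → μ y u ≤ p.length :=
    fun y u p hp => Nat.sInf_le ⟨p, rfl, hp⟩
  -- construction of σ
  have hsig : ∀ y, ∃ u, y ∈ G.verts →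
      (u ∈ G.verts ∧ G.toSG.Adj y u ∧ φ y (ga u) = -1) := by
    intro y
    by_cases hy : y ∈ G.verts
    case neg => exact ⟨y, fun h => absurd h hy⟩
    case pos =>
    have hOutne : (G.verts.filter (fun u => φ y (ga u) = -1)).Nonempty := by
      obtain ⟨k, hk⟩ := hIane y hy
      have hyk : φ y k = -1 := hval_neg y hy k hk
      obtain ⟨c, hcm, hck⟩ := hL6 k y hy hyk
      have hgac : k = ga c := hval_one c hcm k hck
      exact ⟨c, Finset.mem_filter.mpr ⟨hcm, by rw [← hgac]; exact hyk⟩⟩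
    obtain ⟨u, hu, hminu⟩ := Finset.exists_min_image _ (fun u => μ y u) hOutne
    obtain ⟨humem, harc⟩ := Finset.mem_filter.mp hu
    have hyu : y ≠ u := by
      intro h
      rw [← h] at harc
      rw [hval_ga y hy] at harc
      norm_num at harc
    have hadjyu : G.toSG.Adj y u := by
      by_contra hnadj
      have hq0 : G.q y u = 0 := by
        unfold Plumbing.q
        rw [if_neg hyu]
        exact if_neg (fun hb => hnadj hb)
      have hsum0 : ∑ k : Fin N, φ y k * φ u k = 0 := by
        have h := hφ.pairing y hy u humem
        rw [hq0] at h
        unfold diagPair at h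
        linarith
      have hterm : φ y (ga u) * φ u (ga u) = -1 := by
        rw [harc, hval_ga u humem]; ring
      have hex : ∃ k : Fin N, 0 < φ y k * φ u k := by
        by_contra hall
        push_neg at hall
        have h5 : ∑ k ∈ (Finset.univ : Finset (Fin N)).erase (ga u), φ y k * φ u k ≤ 0 :=
          Finset.sum_nonpos (fun k _ => hall k)
        have h6 : φ y (ga u) * φ u (ga u) +
            ∑ k ∈ (Finset.univ : Finset (Fin N)).erase (ga u), φ y k * φ u k =
            ∑ k : Fin N, φ y k * φ u k :=
          Finset.add_sum_erase Finset.univ (fun k => φ y k * φ u k) (Finset.mem_univ (ga u))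
        rw [hterm, hsum0] at h6
        linarith
      obtain ⟨k, hkpos⟩ := hex
      have hcommon : φ y k = -1 ∧ φ u k = -1 := by
        have hyv : φ y k = 1 ∨ φ y k = -1 ∨ φ y k = 0 := by
          rw [hval y hy k]; split_ifs <;> simp
        have huv : φ u k = 1 ∨ φ u k = -1 ∨ φ u k = 0 := by
          rw [hval u humem k]; split_ifs <;> simp
        rcases hyv with h1 | h1 | h1 <;> rcases huv with h2 | h2 | h2 <;>
          rw [h1, h2] at hkpos <;> try norm_num at hkpos
        · exfalso
          have e2 := hval_one u humem k h2
          rw [e2] at h1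
          rw [harc] at h1
          norm_num at h1
        · exact ⟨h1, h2⟩
      obtain ⟨W, hWlen, hWsupp⟩ := hμspec y hy u humem
      have hTsub : W.support.toFinset ⊆ G.verts :=
        fun x hx => hWsupp x (List.mem_toFinset.mp hx)
      have hyT : y ∈ W.support.toFinset := List.mem_toFinset.mpr W.start_mem_support
      have huT : u ∈ W.support.toFinset := List.mem_toFinset.mpr W.end_mem_support
      have hTconn : G.ConnOn W.support.toFinset := hconnSupp y u W hWsupp
      have hcex : ∃ c ∈ W.support.toFinset, φ c k = 1 := by
        by_contra hno
        push_neg at hno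
        exact hcore W.support.toFinset hTsub ⟨y, hyT⟩ hTconn k hno y hyT u huT hyu
          hcommon.1 hcommon.2
      obtain ⟨c, hcT, hck⟩ := hcex
      have hcverts : c ∈ G.verts := hTsub hcT
      have hgac : k = ga c := hval_one c hcverts k hck
      have hcOut : c ∈ G.verts.filter (fun u => φ y (ga u) = -1) :=
        Finset.mem_filter.mpr ⟨hcverts, by rw [← hgac]; exact hcommon.1⟩
      have hcu : c ≠ u := by
        intro h
        rw [h, hcommon.2] at hck
        norm_num at hck
      have hcsupp : c ∈ W.support := List.mem_toFinset.mp hcT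
      have hlen1 : (W.takeUntil c hcsupp).length < W.length := by
        have hspec := SimpleGraph.Walk.take_spec W hcsupp
        have hlen := congrArg SimpleGraph.Walk.length hspec
        rw [SimpleGraph.Walk.length_append] at hlen
        have hd : (W.dropUntil c hcsupp).length ≠ 0 := by
          intro h0
          exact hcu (SimpleGraph.Walk.eq_of_length_eq_zero h0)
        omega
      have hμc : μ y c ≤ (W.takeUntil c hcsupp).length :=
        hμle y c _ (fun x hx => hWsupp x (SimpleGraph.Walk.support_takeUntil_subset W hcsupp hx))
      have hge := hminu c hcOut
      omega
    exact ⟨u, fun _ => ⟨humem, hadjyu, harc⟩⟩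
  choose σ hσ using hsig
  have hmem' : ∀ y ∈ G.verts, σ y ∈ G.verts := fun y hy => (hσ y hy).1
  have hadj' : ∀ y ∈ G.verts, G.toSG.Adj y (σ y) := fun y hy => (hσ y hy).2.1
  have h2c : ∀ y ∈ G.verts, σ (σ y) ≠ y := by
    intro y hy heq
    have hz : σ y ∈ G.verts := hmem' y hy
    have harc1 : φ y (ga (σ y)) = -1 := (hσ y hy).2.2
    have harc2 : φ (σ y) (ga y) = -1 := by
      have h := (hσ (σ y) hz).2.2
      rw [heq] at h
      exact h
    have hyz : y ≠ σ y := by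
      intro h
      have hA := hadj' y hy
      rw [← h] at hA
      exact G.toSG.loopless.irrefl y hA
    have hq1 : G.q y (σ y) = 1 := by
      unfold Plumbing.q
      rw [if_neg hyz]
      exact if_pos (hadj' y hy)
    have hsum1 : ∑ k : Fin N, φ y k * φ (σ y) k = -1 := by
      have h := hφ.pairing y hy (σ y) hz
      rw [hq1] at h
      unfold diagPair at h
      linarith
    have hgyz : ga y ≠ ga (σ y) := by
      intro h
      rw [← h] at harc1
      rw [hval_ga y hy] at harc1
      norm_num at harc1
    have hterm1 : φ y (ga (σ y)) * φ (σ y) (ga (σ y)) = -1 := by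
      rw [harc1, hval_ga (σ y) hz]; ring
    have hterm2 : φ y (ga y) * φ (σ y) (ga y) = -1 := by
      rw [harc2, hval_ga y hy]; ring
    have hex : ∃ k : Fin N, 0 < φ y k * φ (σ y) k := by
      by_contra hall
      push_neg at hall
      have h5 := sum_le_neg_two' (T := (Finset.univ : Finset (Fin N)))
        (g := fun k => φ y k * φ (σ y) k) (fun k _ => hall k)
        (Finset.mem_univ (ga y)) (Finset.mem_univ (ga (σ y))) hgyz hterm2 hterm1
      linarith
    obtain ⟨k, hkpos⟩ := hex
    have hcommon : φ y k = -1 ∧ φ (σ y) k = -1 := by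
      have hyv : φ y k = 1 ∨ φ y k = -1 ∨ φ y k = 0 := by
        rw [hval y hy k]; split_ifs <;> simp
      have huv : φ (σ y) k = 1 ∨ φ (σ y) k = -1 ∨ φ (σ y) k = 0 := by
        rw [hval (σ y) hz k]; split_ifs <;> simp
      rcases hyv with h1 | h1 | h1 <;> rcases huv with h2 | h2 | h2 <;>
        rw [h1, h2] at hkpos <;> try norm_num at hkpos
      · exfalso
        have e1 := hval_one y hy k h1
        have e2 := hval_one (σ y) hz k h2
        exact hgyz (by rw [← e1]; exact e2)
      · exact ⟨h1, h2⟩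
    have hTconn : G.ConnOn {y, σ y} := hpairConn y (σ y) (hadj' y hy)
    have hTsub : ({y, σ y} : Finset ℕ) ⊆ G.verts := by
      intro xq hx
      rcases Finset.mem_insert.mp hx with rfl | hx
      · exact hy
      · rw [Finset.mem_singleton.mp hx]; exact hz
    have hno1 : ∀ v ∈ ({y, σ y} : Finset ℕ), φ v k ≠ 1 := by
      intro v hv
      rcases Finset.mem_insert.mp hv with rfl | hv
      · rw [hcommon.1]; norm_num
      · rw [Finset.mem_singleton.mp hv, hcommon.2]; norm_num
    exact hcore {y, σ y} hTsub ⟨y, Finset.mem_insert_self y _⟩ hTconn k hno1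
      y (Finset.mem_insert_self y _) (σ y) (by simp) hyz hcommon.1 hcommon.2
  exact no_sigma_cycle G.toSG hTree.1 G.verts v₀ hv₀ σ hmem' hadj' h2c
end

section
/- If a plumbing graph Γ̃ blows down to the single-vertex graph with framing 0, then the bilinear form Q_{Γ̃} is negative semidefinite, its null space (radical) has rank 1, and the null space is generated by a vector all of whose coordinates are positive and whose coordinates have greatest common divisor 1. -/
open Finset

open Plumbing
namespace Stmt17Aux

open Plumbing Finset

/-- The inductive invariant. -/
def Good (G : Plumbing) : Prop :=
  G.NegSemiDef ∧
  ∃ m : ℕ → ℤ,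
    (∀ v ∈ G.verts, 0 < m v) ∧
    G.verts.gcd m = 1 ∧
    (∀ v ∈ G.verts, (∑ y ∈ G.verts, G.q v y * m y) = 0) ∧
    (∀ x : ℕ → ℤ, (∀ v ∈ G.verts, (∑ y ∈ G.verts, G.q v y * x y) = 0) →
      ∃ c : ℤ, ∀ v ∈ G.verts, x v = c * m v)

lemma adj_false_of_not_mem (G : Plumbing) {x : ℕ} (hx : x ∉ G.verts) (y : ℕ) :
    G.adj x y = false := by
  cases h : G.adj x y
  · rfl
  · exact absurd (G.adj_support x y h).1 hx

lemma bool_eq_of_iff {a b : Bool} (h : a = true ↔ b = true) : a = b := by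
  cases a <;> cases b <;> simp_all

lemma q_diag (G : Plumbing) (x : ℕ) : G.q x x = G.framing x := by
  simp [Plumbing.q]

lemma q_off (G : Plumbing) {x y : ℕ} (hxy : x ≠ y) :
    G.q x y = if G.adj x y = true then 1 else 0 := by
  simp [Plumbing.q, hxy]

lemma q_symm (G : Plumbing) (u v : ℕ) : G.q u v = G.q v u := by
  unfold Plumbing.q
  by_cases h : u = v
  · subst h; rfl
  · rw [if_neg h, if_neg (Ne.symm h), G.adj_symm u v]

lemma sum_ite_single {V : Finset ℕ} {v : ℕ} (hv : v ∈ V) (g : ℕ → ℤ) :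
    ∑ y ∈ V, g y * (if y = v then (1:ℤ) else 0) = g v := by
  rw [Finset.sum_eq_single_of_mem v hv]
  · simp
  · intro y _ hy; simp [hy]

lemma sum_ite_pair {V : Finset ℕ} {u w : ℕ} (hu : u ∈ V) (hw : w ∈ V)
    (huw : u ≠ w) (g : ℕ → ℤ) :
    ∑ y ∈ V, g y * (if y = u ∨ y = w then (1:ℤ) else 0) = g u + g w := by
  rw [← Finset.sum_subset (show ({u, w} : Finset ℕ) ⊆ V by
        intro y hy; rcases Finset.mem_insert.1 hy with h | h
        · exact h ▸ hu
        · exact (Finset.mem_singleton.1 h) ▸ hw)]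
  · rw [Finset.sum_pair huw]
    simp [huw, Ne.symm huw]
  · intro y _ hy
    have h1 : y ≠ u := fun e => hy (by simp [e])
    have h2 : y ≠ w := fun e => hy (by simp [e])
    simp [h1, h2]

lemma sum2_point {V : Finset ℕ} {v : ℕ} (hv : v ∈ V) (x : ℕ → ℤ) :
    ∑ p ∈ V, ∑ y ∈ V, (x p * x y) * (if p = v ∧ y = v then (-1:ℤ) else 0)
      = -(x v * x v) := by
  rw [Finset.sum_eq_single_of_mem v hv]
  · rw [Finset.sum_eq_single_of_mem v hv]
    · simp
    · intro y _ hy; simp [hy]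
  · intro p _ hp
    apply Finset.sum_eq_zero
    intro y _
    simp [hp]

lemma sum2_rank1 {V : Finset ℕ} (x a : ℕ → ℤ) :
    ∑ p ∈ V, ∑ y ∈ V, (x p * x y) * (-(a p * a y)) =
      -((∑ p ∈ V, x p * a p) ^ 2) := by
  calc ∑ p ∈ V, ∑ y ∈ V, (x p * x y) * (-(a p * a y))
      = ∑ p ∈ V, ∑ y ∈ V, -((x p * a p) * (x y * a y)) := by
        refine Finset.sum_congr rfl fun p _ => Finset.sum_congr rfl fun y _ => by ring
    _ = -∑ p ∈ V, ∑ y ∈ V, (x p * a p) * (x y * a y) := by simp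
    _ = -((∑ p ∈ V, x p * a p) * (∑ y ∈ V, x y * a y)) := by rw [← Finset.sum_mul_sum]
    _ = -((∑ p ∈ V, x p * a p) ^ 2) := by rw [sq]


lemma upd_ne {m : ℕ → ℤ} {b t : ℕ} (c : ℤ) (S : Finset ℕ) (hb : b ∉ S) (ht : t ∈ S) :
    Function.update m b c t = m t := by
  have hne : t ≠ b := by rintro rfl; exact hb ht
  exact Function.update_of_ne hne _ _

/-! ### Vertex blowup -/

section VB
variable {G G' : Plumbing} {v b : ℕ} (h : VertexBlowup G G' v b)

include h

lemma vb_bv : b ≠ v := fun e => h.b_new (e ▸ h.v_mem)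

lemma vb_q_mem {x y : ℕ} (hx : x ∈ G.verts) (hy : y ∈ G.verts) :
    G'.q x y = G.q x y + (if x = v ∧ y = v then (-1:ℤ) else 0) := by
  have hxb : x ≠ b := fun e => h.b_new (e ▸ hx)
  have hyb : y ≠ b := fun e => h.b_new (e ▸ hy)
  by_cases hxy : x = y
  · subst hxy
    rw [q_diag, q_diag]
    by_cases hxv : x = v
    · rw [if_pos ⟨hxv, hxv⟩, hxv, h.framing_v]; try ring
    · rw [if_neg (fun hc => hxv hc.1), h.framing_other x hx hxv]; try ring
  · have hadj : G'.adj x y = G.adj x y := by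
      apply bool_eq_of_iff
      rw [h.adj_iff]
      constructor
      · rintro (h1 | ⟨_, h2⟩ | ⟨h2, _⟩)
        · exact h1
        · exact absurd h2 hyb
        · exact absurd h2 hxb
      · exact fun h1 => Or.inl h1
    have hnv : ¬(x = v ∧ y = v) := fun hc => hxy (hc.1.trans hc.2.symm)
    rw [q_off G' hxy, q_off G hxy, hadj, if_neg hnv, add_zero]

lemma vb_q_b_right {y : ℕ} (hy : y ∈ G.verts) :
    G'.q b y = if y = v then (1:ℤ) else 0 := by
  have hby : b ≠ y := fun e => h.b_new (e ▸ hy)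
  have hbv : b ≠ v := vb_bv h
  have hadj : G'.adj b y = true ↔ y = v := by
    rw [h.adj_iff]
    constructor
    · rintro (h1 | ⟨h2, _⟩ | ⟨_, h2⟩)
      · rw [adj_false_of_not_mem G h.b_new y] at h1; exact absurd h1 (by simp)
      · exact absurd h2 hbv
      · exact h2
    · exact fun e => Or.inr (Or.inr ⟨rfl, e⟩)
  rw [q_off G' hby]
  by_cases hyv : y = v
  · rw [if_pos (hadj.2 hyv), if_pos hyv]
  · rw [if_neg hyv, if_neg (fun hT => hyv (hadj.1 hT))]

lemma vb_q_b_left {y : ℕ} (hy : y ∈ G.verts) :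
    G'.q y b = if y = v then (1:ℤ) else 0 := by
  rw [q_symm]; exact vb_q_b_right h hy

lemma vb_q_bb : G'.q b b = -1 := by
  rw [q_diag, h.framing_b]

/-- Row identity for the vertex blowup. -/
lemma vb_row (x : ℕ → ℤ) {t : ℕ} (ht : t ∈ G.verts) :
    (∑ y ∈ G'.verts, G'.q t y * x y) =
      (∑ y ∈ G.verts, G.q t y * x y) + (if t = v then (1:ℤ) else 0) * (x b - x v) := by
  rw [h.verts_eq, Finset.sum_insert h.b_new]
  have e1 : G'.q t b * x b = (if t = v then (1:ℤ) else 0) * x b := by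
    rw [vb_q_b_left h ht]
  have e2 : ∑ y ∈ G.verts, G'.q t y * x y
      = ∑ y ∈ G.verts, (G.q t y * x y + (if t = v ∧ y = v then (-1:ℤ) else 0) * x y) := by
    refine Finset.sum_congr rfl fun y hy => ?_
    rw [vb_q_mem h ht hy]; try ring
  rw [e1, e2, Finset.sum_add_distrib]
  have e3 : ∑ y ∈ G.verts, (if t = v ∧ y = v then (-1:ℤ) else 0) * x y
      = (if t = v then (1:ℤ) else 0) * (-x v) := by
    by_cases htv : t = v
    · rw [if_pos htv, one_mul]
      have e4 : ∀ y ∈ G.verts, (if t = v ∧ y = v then (-1:ℤ) else 0) * x y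
          = (-x y) * (if y = v then (1:ℤ) else 0) := by
        intro y _
        by_cases hyv : y = v
        · rw [if_pos ⟨htv, hyv⟩, if_pos hyv]; try ring
        · rw [if_neg (fun hc => hyv hc.2), if_neg hyv]; try ring
      rw [Finset.sum_congr rfl e4]
      have := sum_ite_single h.v_mem (fun z => -x z)
      simpa only [] using this
    · have e4 : ∀ y ∈ G.verts, (if t = v ∧ y = v then (-1:ℤ) else 0) * x y = 0 := by
        intro y _
        rw [if_neg (fun hc => htv hc.1), zero_mul]
      rw [Finset.sum_congr rfl e4, Finset.sum_const_zero, if_neg htv, zero_mul]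
  rw [e3]
  ring

/-- Value of the form on the vertex blowup. -/
lemma vb_QF (x : ℕ → ℤ) : G'.QF x x = G.QF x x - (x v - x b) ^ 2 := by
  unfold Plumbing.QF
  rw [h.verts_eq, Finset.sum_insert h.b_new, Finset.sum_insert h.b_new]
  have t0 : x b * x b * G'.q b b = -(x b * x b) := by rw [vb_q_bb h]; try ring
  have t1 : ∑ y ∈ G.verts, x b * x y * G'.q b y = x b * x v := by
    have e : ∀ y ∈ G.verts, x b * x y * G'.q b y
        = (x b * x y) * (if y = v then (1:ℤ) else 0) := by
      intro y hy; rw [vb_q_b_right h hy]; try ring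
    rw [Finset.sum_congr rfl e]
    simpa only [] using sum_ite_single h.v_mem (fun z => x b * x z)
  have t2 : ∑ p ∈ G.verts, ∑ y ∈ insert b G.verts, x p * x y * G'.q p y
      = x v * x b + ((∑ p ∈ G.verts, ∑ y ∈ G.verts, x p * x y * G.q p y)
          + -(x v * x v)) := by
    have e : ∀ p ∈ G.verts, ∑ y ∈ insert b G.verts, x p * x y * G'.q p y
        = (x p * x b) * (if p = v then (1:ℤ) else 0)
          + ((∑ y ∈ G.verts, x p * x y * G.q p y)
              + ∑ y ∈ G.verts, (x p * x y) * (if p = v ∧ y = v then (-1:ℤ) else 0)) := by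
      intro p hp
      rw [Finset.sum_insert h.b_new, vb_q_b_left h hp]
      have e' : ∀ y ∈ G.verts, x p * x y * G'.q p y
          = x p * x y * G.q p y + (x p * x y) * (if p = v ∧ y = v then (-1:ℤ) else 0) := by
        intro y hy; rw [vb_q_mem h hp hy]; try ring
      rw [Finset.sum_congr rfl e', Finset.sum_add_distrib]
      try ring
    rw [Finset.sum_congr rfl e, Finset.sum_add_distrib, Finset.sum_add_distrib,
      sum2_point h.v_mem x]
    congr 1
    simpa only [] using sum_ite_single h.v_mem (fun z => x z * x b)
  rw [t0, t1, t2]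
  ring

end VB

/-! ### Edge blowup -/

section EB
variable {G G' : Plumbing} {u w b : ℕ} (h : EdgeBlowup G G' u w b)

include h

lemma eb_uV : u ∈ G.verts := (G.adj_support u w h.edge).1
lemma eb_wV : w ∈ G.verts := (G.adj_support u w h.edge).2
lemma eb_uw : u ≠ w := by
  intro e
  have h2 := h.edge
  rw [e] at h2
  rw [G.adj_irrefl w] at h2
  exact absurd h2 (by simp)

lemma eb_q_mem {x y : ℕ} (hx : x ∈ G.verts) (hy : y ∈ G.verts) :
    G'.q x y = G.q x y
      - (if x = u ∨ x = w then (1:ℤ) else 0) * (if y = u ∨ y = w then (1:ℤ) else 0) := by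
  have hxb : x ≠ b := fun e => h.b_new (e ▸ hx)
  have hyb : y ≠ b := fun e => h.b_new (e ▸ hy)
  have huw := eb_uw h
  by_cases hxy : x = y
  · subst hxy
    rw [q_diag, q_diag]
    by_cases hxu : x = u
    · rw [if_pos (Or.inl hxu), hxu, h.framing_u]; try ring
    · by_cases hxw : x = w
      · rw [if_pos (Or.inr hxw), hxw, h.framing_w]; try ring
      · rw [if_neg (fun hc => hc.elim hxu hxw), h.framing_other x hx hxu hxw]; try ring
  · rw [q_off G' hxy, q_off G hxy]
    by_cases hcase : (x = u ∧ y = w) ∨ (x = w ∧ y = u)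
    · have hGadj : G.adj x y = true := by
        rcases hcase with ⟨e1, e2⟩ | ⟨e1, e2⟩
        · rw [e1, e2]; exact h.edge
        · rw [e1, e2, G.adj_symm]; exact h.edge
      have hG'adj : G'.adj x y = false := by
        cases hA : G'.adj x y
        · rfl
        · rcases (h.adj_iff x y).1 hA with ⟨_, h2⟩ | ⟨h2, _⟩ | ⟨h2, _⟩
          · exact absurd hcase h2
          · exact absurd h2 hxb
          · exact absurd h2 hyb
      rw [if_pos hGadj, if_neg (fun hT : G'.adj x y = true => by
        rw [hG'adj] at hT; exact absurd hT (by simp))]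
      rcases hcase with ⟨e1, e2⟩ | ⟨e1, e2⟩
      · rw [if_pos (Or.inl e1), if_pos (Or.inr e2)]; try ring
      · rw [if_pos (Or.inr e1), if_pos (Or.inl e2)]; try ring
    · have hadj : G'.adj x y = G.adj x y := by
        apply bool_eq_of_iff
        rw [h.adj_iff]
        constructor
        · rintro (⟨h1, _⟩ | ⟨h2, _⟩ | ⟨h2, _⟩)
          · exact h1
          · exact absurd h2 hxb
          · exact absurd h2 hyb
        · exact fun h1 => Or.inl ⟨h1, hcase⟩
      have hz : (if x = u ∨ x = w then (1:ℤ) else 0)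
          * (if y = u ∨ y = w then (1:ℤ) else 0) = 0 := by
        by_cases h1 : x = u ∨ x = w
        · have h2 : ¬(y = u ∨ y = w) := by
            rintro (e | e) <;> rcases h1 with e' | e'
            · exact hxy (e'.trans e.symm)
            · exact hcase (Or.inr ⟨e', e⟩)
            · exact hcase (Or.inl ⟨e', e⟩)
            · exact hxy (e'.trans e.symm)
          rw [if_neg h2, mul_zero]
        · rw [if_neg h1, zero_mul]
      rw [hadj, hz, sub_zero]

lemma eb_q_b_right {y : ℕ} (hy : y ∈ G.verts) :
    G'.q b y = if y = u ∨ y = w then (1:ℤ) else 0 := by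
  have hby : b ≠ y := fun e => h.b_new (e ▸ hy)
  have hadj : G'.adj b y = true ↔ (y = u ∨ y = w) := by
    rw [h.adj_iff]
    constructor
    · rintro (⟨h1, _⟩ | ⟨_, h2⟩ | ⟨h2, _⟩)
      · rw [adj_false_of_not_mem G h.b_new y] at h1; exact absurd h1 (by simp)
      · exact h2
      · exact absurd h2.symm hby
    · exact fun e => Or.inr (Or.inl ⟨rfl, e⟩)
  rw [q_off G' hby]
  by_cases hc : y = u ∨ y = w
  · rw [if_pos (hadj.2 hc), if_pos hc]
  · rw [if_neg hc, if_neg (fun hT => hc (hadj.1 hT))]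

lemma eb_q_b_left {y : ℕ} (hy : y ∈ G.verts) :
    G'.q y b = if y = u ∨ y = w then (1:ℤ) else 0 := by
  rw [q_symm]; exact eb_q_b_right h hy

lemma eb_q_bb : G'.q b b = -1 := by
  rw [q_diag, h.framing_b]

/-- Row identity for the edge blowup. -/
lemma eb_row (x : ℕ → ℤ) {t : ℕ} (ht : t ∈ G.verts) :
    (∑ y ∈ G'.verts, G'.q t y * x y) =
      (∑ y ∈ G.verts, G.q t y * x y) +
        (if t = u ∨ t = w then (1:ℤ) else 0) * (x b - x u - x w) := by
  rw [h.verts_eq, Finset.sum_insert h.b_new]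
  have e1 : G'.q t b * x b = (if t = u ∨ t = w then (1:ℤ) else 0) * x b := by
    rw [eb_q_b_left h ht]
  have e2 : ∑ y ∈ G.verts, G'.q t y * x y
      = ∑ y ∈ G.verts, (G.q t y * x y +
          (-((if t = u ∨ t = w then (1:ℤ) else 0) * x y))
            * (if y = u ∨ y = w then (1:ℤ) else 0)) := by
    refine Finset.sum_congr rfl fun y hy => ?_
    rw [eb_q_mem h ht hy]; try ring
  rw [e1, e2, Finset.sum_add_distrib]
  have e3 := sum_ite_pair (eb_uV h) (eb_wV h) (eb_uw h)
      (fun z => -((if t = u ∨ t = w then (1:ℤ) else 0) * x z))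
  rw [e3]
  ring

/-- Value of the form on the edge blowup. -/
lemma eb_QF (x : ℕ → ℤ) : G'.QF x x = G.QF x x - (x u + x w - x b) ^ 2 := by
  unfold Plumbing.QF
  rw [h.verts_eq, Finset.sum_insert h.b_new, Finset.sum_insert h.b_new]
  have t0 : x b * x b * G'.q b b = -(x b * x b) := by rw [eb_q_bb h]; try ring
  have t1 : ∑ y ∈ G.verts, x b * x y * G'.q b y = x b * x u + x b * x w := by
    have e : ∀ y ∈ G.verts, x b * x y * G'.q b y
        = (x b * x y) * (if y = u ∨ y = w then (1:ℤ) else 0) := by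
      intro y hy; rw [eb_q_b_right h hy]
    rw [Finset.sum_congr rfl e]
    simpa only [] using sum_ite_pair (eb_uV h) (eb_wV h) (eb_uw h) (fun z => x b * x z)
  have t2 : ∑ p ∈ G.verts, ∑ y ∈ insert b G.verts, x p * x y * G'.q p y
      = (x u * x b + x w * x b) + ((∑ p ∈ G.verts, ∑ y ∈ G.verts, x p * x y * G.q p y)
          + -((x u + x w) ^ 2)) := by
    have e : ∀ p ∈ G.verts, ∑ y ∈ insert b G.verts, x p * x y * G'.q p y
        = (x p * x b) * (if p = u ∨ p = w then (1:ℤ) else 0)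
          + ((∑ y ∈ G.verts, x p * x y * G.q p y)
              + ∑ y ∈ G.verts, (x p * x y) *
                  (-((if p = u ∨ p = w then (1:ℤ) else 0)
                    * (if y = u ∨ y = w then (1:ℤ) else 0)))) := by
      intro p hp
      rw [Finset.sum_insert h.b_new, eb_q_b_left h hp]
      have e' : ∀ y ∈ G.verts, x p * x y * G'.q p y
          = x p * x y * G.q p y + (x p * x y) *
              (-((if p = u ∨ p = w then (1:ℤ) else 0)
                * (if y = u ∨ y = w then (1:ℤ) else 0))) := by
        intro y hy; rw [eb_q_mem h hp hy]; try ring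
      rw [Finset.sum_congr rfl e', Finset.sum_add_distrib]
      try ring
    rw [Finset.sum_congr rfl e, Finset.sum_add_distrib, Finset.sum_add_distrib]
    have r1 : ∑ p ∈ G.verts, ∑ y ∈ G.verts, (x p * x y) *
        (-((if p = u ∨ p = w then (1:ℤ) else 0) * (if y = u ∨ y = w then (1:ℤ) else 0)))
        = -((x u + x w) ^ 2) := by
      have := sum2_rank1 (V := G.verts) x (fun t => if t = u ∨ t = w then (1:ℤ) else 0)
      rw [this]
      have := sum_ite_pair (eb_uV h) (eb_wV h) (eb_uw h) x
      rw [this]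
    have r2 : ∑ p ∈ G.verts, (x p * x b) * (if p = u ∨ p = w then (1:ℤ) else 0)
        = x u * x b + x w * x b := by
      simpa only [] using sum_ite_pair (eb_uV h) (eb_wV h) (eb_uw h) (fun z => x z * x b)
    rw [r1, r2]
  rw [t0, t1, t2]
  ring

end EB

/-! ### The invariant is preserved -/

lemma good_zero (Z : Plumbing) (hZ : Z.IsZeroVertexGraph) : Good Z := by
  obtain ⟨v, hv, hf⟩ := hZ
  have hq : Z.q v v = 0 := by rw [q_diag, hf]
  constructor
  · intro x
    simp [Plumbing.QF, hv, hq]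
  · refine ⟨fun _ => 1, ?_, ?_, ?_, ?_⟩
    · intro t ht; rw [hv, Finset.mem_singleton] at ht; subst ht; norm_num
    · rw [hv, Finset.gcd_singleton]; rfl
    · intro t ht; rw [hv, Finset.mem_singleton] at ht; subst ht
      simp [hv, hq]
    · intro x _
      refine ⟨x v, fun t ht => ?_⟩
      rw [hv, Finset.mem_singleton] at ht; subst ht; simp

lemma good_vb {G G' : Plumbing} {v b : ℕ} (h : VertexBlowup G G' v b)
    (hG : Good G) : Good G' := by
  obtain ⟨hns, m, hpos, hgcd, hker, hrk⟩ := hG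
  constructor
  · intro x
    rw [vb_QF h x]
    have := hns x
    nlinarith [sq_nonneg (x v - x b)]
  · refine ⟨Function.update m b (m v), ?_, ?_, ?_, ?_⟩
    · intro t ht
      rw [h.verts_eq, Finset.mem_insert] at ht
      rcases ht with rfl | ht
      · rw [Function.update_self]; exact hpos v h.v_mem
      · rw [upd_ne _ _ h.b_new ht]
        exact hpos t ht
    · rw [h.verts_eq, Finset.gcd_insert, Function.update_self]
      have e : G.verts.gcd (Function.update m b (m v)) = G.verts.gcd m := by
        apply Finset.gcd_congr rfl
        intro t ht
        exact upd_ne _ _ h.b_new ht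
      rw [e, hgcd, gcd_one_right]
    · intro t ht
      rw [h.verts_eq, Finset.mem_insert] at ht
      set m' := Function.update m b (m v) with hm'
      have hmb : m' b = m v := Function.update_self _ _ _
      have hmV : ∀ z ∈ G.verts, m' z = m z := fun z hz => upd_ne _ _ h.b_new hz
      have hsum : ∑ y ∈ G.verts, G.q t y * m' y = ∑ y ∈ G.verts, G.q t y * m y :=
        Finset.sum_congr rfl fun y hy => by rw [hmV y hy]
      rcases ht with rfl | ht
      · rw [h.verts_eq, Finset.sum_insert h.b_new, vb_q_bb h, hmb]
        have e : ∀ y ∈ G.verts, G'.q t y * m' y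
            = m' y * (if y = v then (1:ℤ) else 0) := by
          intro y hy; rw [vb_q_b_right h hy]; try ring
        rw [Finset.sum_congr rfl e, sum_ite_single h.v_mem m', hmV v h.v_mem]
        try ring
      · rw [vb_row h m' ht, hsum, hker t ht, hmb, hmV v h.v_mem]
        simp
    · intro x hx
      set m' := Function.update m b (m v) with hm'
      have hmb : m' b = m v := Function.update_self _ _ _
      have hmV : ∀ z ∈ G.verts, m' z = m z := fun z hz => upd_ne _ _ h.b_new hz
      have hrowb : x b = x v := by
        have hb := hx b (by rw [h.verts_eq]; exact Finset.mem_insert_self _ _)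
        rw [h.verts_eq, Finset.sum_insert h.b_new, vb_q_bb h] at hb
        have e : ∀ y ∈ G.verts, G'.q b y * x y
            = x y * (if y = v then (1:ℤ) else 0) := by
          intro y hy; rw [vb_q_b_right h hy]; try ring
        rw [Finset.sum_congr rfl e, sum_ite_single h.v_mem x] at hb
        linarith
      have hrows : ∀ t ∈ G.verts, ∑ y ∈ G.verts, G.q t y * x y = 0 := by
        intro t ht
        have hxt := hx t (by rw [h.verts_eq]; exact Finset.mem_insert_of_mem ht)
        rw [vb_row h x ht, hrowb] at hxt
        simpa using hxt
      obtain ⟨c, hc⟩ := hrk x hrows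
      refine ⟨c, fun t ht => ?_⟩
      rw [h.verts_eq, Finset.mem_insert] at ht
      rcases ht with rfl | ht
      · rw [hmb, hrowb, hc v h.v_mem]
      · rw [hmV t ht, hc t ht]

lemma good_eb {G G' : Plumbing} {u w b : ℕ} (h : EdgeBlowup G G' u w b)
    (hG : Good G) : Good G' := by
  obtain ⟨hns, m, hpos, hgcd, hker, hrk⟩ := hG
  have huV := eb_uV h
  have hwV := eb_wV h
  have huw := eb_uw h
  constructor
  · intro x
    rw [eb_QF h x]
    have := hns x
    nlinarith [sq_nonneg (x u + x w - x b)]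
  · refine ⟨Function.update m b (m u + m w), ?_, ?_, ?_, ?_⟩
    · intro t ht
      rw [h.verts_eq, Finset.mem_insert] at ht
      rcases ht with rfl | ht
      · rw [Function.update_self]
        have := hpos u huV
        have := hpos w hwV
        linarith
      · rw [upd_ne _ _ h.b_new ht]
        exact hpos t ht
    · rw [h.verts_eq, Finset.gcd_insert, Function.update_self]
      have e : G.verts.gcd (Function.update m b (m u + m w)) = G.verts.gcd m := by
        apply Finset.gcd_congr rfl
        intro t ht
        exact upd_ne _ _ h.b_new ht
      rw [e, hgcd, gcd_one_right]
    · intro t ht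
      rw [h.verts_eq, Finset.mem_insert] at ht
      set m' := Function.update m b (m u + m w) with hm'
      have hmb : m' b = m u + m w := Function.update_self _ _ _
      have hmV : ∀ z ∈ G.verts, m' z = m z := fun z hz => upd_ne _ _ h.b_new hz
      have hsum : ∑ y ∈ G.verts, G.q t y * m' y = ∑ y ∈ G.verts, G.q t y * m y :=
        Finset.sum_congr rfl fun y hy => by rw [hmV y hy]
      rcases ht with rfl | ht
      · rw [h.verts_eq, Finset.sum_insert h.b_new, eb_q_bb h, hmb]
        have e : ∀ y ∈ G.verts, G'.q t y * m' y
            = m' y * (if y = u ∨ y = w then (1:ℤ) else 0) := by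
          intro y hy; rw [eb_q_b_right h hy]; try ring
        rw [Finset.sum_congr rfl e, sum_ite_pair huV hwV huw m',
          hmV u huV, hmV w hwV]
        try ring
      · rw [eb_row h m' ht, hsum, hker t ht, hmb, hmV u huV, hmV w hwV]
        simp
    · intro x hx
      set m' := Function.update m b (m u + m w) with hm'
      have hmb : m' b = m u + m w := Function.update_self _ _ _
      have hmV : ∀ z ∈ G.verts, m' z = m z := fun z hz => upd_ne _ _ h.b_new hz
      have hrowb : x b = x u + x w := by
        have hb := hx b (by rw [h.verts_eq]; exact Finset.mem_insert_self _ _)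
        rw [h.verts_eq, Finset.sum_insert h.b_new, eb_q_bb h] at hb
        have e : ∀ y ∈ G.verts, G'.q b y * x y
            = x y * (if y = u ∨ y = w then (1:ℤ) else 0) := by
          intro y hy; rw [eb_q_b_right h hy]; try ring
        rw [Finset.sum_congr rfl e, sum_ite_pair huV hwV huw x] at hb
        linarith
      have hrows : ∀ t ∈ G.verts, ∑ y ∈ G.verts, G.q t y * x y = 0 := by
        intro t ht
        have hxt := hx t (by rw [h.verts_eq]; exact Finset.mem_insert_of_mem ht)
        rw [eb_row h x ht, hrowb] at hxt
        simpa using hxt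
      obtain ⟨c, hc⟩ := hrk x hrows
      refine ⟨c, fun t ht => ?_⟩
      rw [h.verts_eq, Finset.mem_insert] at ht
      rcases ht with rfl | ht
      · rw [hmb, hrowb, hc u huV, hc w hwV]; try ring
      · rw [hmV t ht, hc t ht]

lemma good_of_blowsDownTo {H Z : Plumbing} (hZ : Z.IsZeroVertexGraph)
    (hbd : BlowsDownTo H Z) : Good H := by
  induction hbd using Relation.ReflTransGen.head_induction_on with
  | refl => exact good_zero Z hZ
  | head hstep _ ih =>
    rcases hstep with ⟨v, b, hvb⟩ | ⟨u, w, b, heb⟩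
    · exact good_vb hvb ih
    · exact good_eb heb ih

end Stmt17Aux

/-- STATEMENT 17: a plumbing graph blowing down to the single-vertex graph with
framing `0` is negative semidefinite, and its null space has rank 1, generated by
a vector with positive coordinates of greatest common divisor `1`. -/
theorem stmt17_semidefinite (H Z : Plumbing) (hZ : Z.IsZeroVertexGraph)
    (hbd : BlowsDownTo H Z) :
    H.NegSemiDef ∧
    ∃ m : ℕ → ℤ,
      (∀ v ∈ H.verts, 0 < m v) ∧
      H.verts.gcd m = 1 ∧
      (∀ v ∈ H.verts, (∑ y ∈ H.verts, H.q v y * m y) = 0) ∧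
      (∀ x : ℕ → ℤ, (∀ v ∈ H.verts, (∑ y ∈ H.verts, H.q v y * x y) = 0) →
        ∃ c : ℤ, ∀ v ∈ H.verts, x v = c * m v) := by
  exact Stmt17Aux.good_of_blowsDownTo hZ hbd
end
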